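/- arXiv:cs/0602085 — 9 statements merged into one kernel-verified Lean document; each statement's English description precedes it below -/
import Mathlib

section
/- Let D ≥ 2 be an integer. Let N be a finite collection of items, each item j having width ρ_j = D^{e_j} for some integer e_j (possibly negative). Suppose the total width Σ_{j∈N} ρ_j equals x·D^{−k} + r, where k and x are integers and r is a real number with 0 < r < D^{−k}. Then N has a subset R whose total width Σ_{j∈R} ρ_j equals exactly r. -/
lemma key {α : Type*} [DecidableEq α] (D : ℕ) (hD : 2 ≤ D) :
    ∀ (n : ℕ) (S : Finset α), S.card = n → ∀ (a : α → ℕ) (t : ℕ) (v c : ℤ),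
    0 ≤ v → v < (D:ℤ)^t → ∑ j ∈ S, (D:ℤ)^(a j) = v + c * (D:ℤ)^t →
    ∃ R ⊆ S, ∑ j ∈ R, (D:ℤ)^(a j) = v := by
  have hD0 : (0:ℤ) < (D:ℤ) := by positivity
  intro n
  induction n with
  | zero =>
    intro S hS a t v c hv0 hvt hsum
    rw [Finset.card_eq_zero] at hS
    subst hS
    simp only [Finset.sum_empty] at hsum
    have hDt : (0:ℤ) < (D:ℤ)^t := by positivity
    have hc : c = 0 := by
      rcases lt_trichotomy c 0 with h | h | h
      · nlinarith
      · exact h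
      · nlinarith
    refine ⟨∅, Finset.Subset.refl _, ?_⟩
    rw [hc, zero_mul, add_zero] at hsum
    simp only [Finset.sum_empty]
    omega
  | succ n ih =>
    intro S hS a t v c hv0 hvt hsum
    have hne : S.Nonempty := Finset.card_pos.mp (by omega)
    obtain ⟨j0, hj0⟩ := hne
    have hcard : (S.erase j0).card = n := by
      rw [Finset.card_erase_of_mem hj0]; omega
    have hsplit : ∑ j ∈ S.erase j0, (D:ℤ)^(a j) + (D:ℤ)^(a j0) = ∑ j ∈ S, (D:ℤ)^(a j) :=
      Finset.sum_erase_add _ _ hj0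
    set W : ℤ := (D:ℤ)^(a j0) with hW
    have hW1 : (1:ℤ) ≤ W := one_le_pow₀ (by omega)
    by_cases hvW : W ≤ v
    · -- include j0
      obtain ⟨R, hRsub, hRsum⟩ := ih (S.erase j0) hcard a t (v - W) c
        (by omega) (by omega) (by omega)
      have hj0R : j0 ∉ R := fun h => Finset.notMem_erase j0 S (hRsub h)
      refine ⟨insert j0 R, ?_, ?_⟩
      · intro y hy
        rcases Finset.mem_insert.mp hy with h | h
        · exact h ▸ hj0
        · exact Finset.mem_of_mem_erase (hRsub h)
      · rw [Finset.sum_insert hj0R, hRsum]; ring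
    · -- drop j0
      push_neg at hvW
      set t' : ℕ := min (a j0) t with ht'
      have h1 : t' ≤ a j0 := min_le_left _ _
      have h2 : t' ≤ t := min_le_right _ _
      set c' : ℤ := c * (D:ℤ)^(t - t') - (D:ℤ)^(a j0 - t') with hc'
      have hkey : c' * (D:ℤ)^t' = c * (D:ℤ)^t - W := by
        rw [hc', sub_mul, mul_assoc, ← pow_add, ← pow_add,
          Nat.sub_add_cancel h2, Nat.sub_add_cancel h1]
      have hvt' : v < (D:ℤ)^t' := by
        rcases min_cases (a j0) t with ⟨h, _⟩ | ⟨h, _⟩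
        · rw [ht', h]; exact hvW
        · rw [ht', h]; exact hvt
      obtain ⟨R, hRsub, hRsum⟩ := ih (S.erase j0) hcard a t' v c' hv0 hvt' (by omega)
      exact ⟨R, fun y hy => Finset.mem_of_mem_erase (hRsub hy), hRsum⟩

/-- Let D ≥ 2 be an integer. Let N be a finite collection of items,
each item j having width ρ_j = D^{e_j} for some integer e_j. If the total width
equals x·D^{−k} + r with k, x integers and 0 < r < D^{−k}, then N has a subset R
of total width exactly r. -/
theorem statement0 {α : Type*} [DecidableEq α] (D : ℕ) (hD : 2 ≤ D)
    (N : Finset α) (e : α → ℤ) (k x : ℤ) (r : ℝ)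
    (hr0 : 0 < r) (hr1 : r < (D : ℝ) ^ (-k))
    (htot : ∑ j ∈ N, (D : ℝ) ^ (e j) = (x : ℝ) * (D : ℝ) ^ (-k) + r) :
    ∃ R ⊆ N, ∑ j ∈ R, (D : ℝ) ^ (e j) = r := by
  have hD0R : (0:ℝ) < (D:ℝ) := by
    have : 0 < D := by omega
    exact_mod_cast this
  have hDne : (D:ℝ) ≠ 0 := ne_of_gt hD0R
  set M : ℕ := k.toNat ⊔ N.sup (fun j => (-(e j)).toNat) with hM
  have hkM : k ≤ (M:ℤ) := by
    have h1 : k.toNat ≤ M := le_sup_left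
    have := Int.self_le_toNat k
    omega
  have heM : ∀ j ∈ N, 0 ≤ e j + M := by
    intro j hj
    have h1 : (-(e j)).toNat ≤ M :=
      le_trans (Finset.le_sup (f := fun j => (-(e j)).toNat) hj) le_sup_right
    have := Int.self_le_toNat (-(e j))
    omega
  set a : α → ℕ := fun j => (e j + M).toNat with ha
  set t : ℕ := ((M:ℤ) - k).toNat with ht
  have hDM : (0:ℝ) < (D:ℝ) ^ (M:ℤ) := zpow_pos hD0R _
  have hcast : ∀ j ∈ N, ((D:ℤ)^(a j) : ℝ) = (D:ℝ)^(e j) * (D:ℝ)^(M:ℤ) := by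
    intro j hj
    have h1 : ((a j : ℕ):ℤ) = e j + M := Int.toNat_of_nonneg (heM j hj)
    push_cast
    rw [← zpow_natCast (D:ℝ) (a j), h1, zpow_add₀ hDne]
  have htcast : ((D:ℤ)^t : ℝ) = (D:ℝ)^(-k) * (D:ℝ)^(M:ℤ) := by
    have h1 : ((t : ℕ):ℤ) = (M:ℤ) - k := Int.toNat_of_nonneg (by omega)
    push_cast
    rw [← zpow_natCast (D:ℝ) t, h1,
      show (M:ℤ) - k = -k + (M:ℤ) by ring, zpow_add₀ hDne]
  set v : ℤ := (∑ j ∈ N, (D:ℤ)^(a j)) - x * (D:ℤ)^t with hv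
  have hvR : (v:ℝ) = r * (D:ℝ)^(M:ℤ) := by
    have : ((v:ℤ):ℝ) = (∑ j ∈ N, ((D:ℤ)^(a j):ℝ)) - (x:ℝ) * ((D:ℤ)^t:ℝ) := by
      rw [hv]; push_cast; ring
    rw [this, Finset.sum_congr rfl hcast, htcast, ← Finset.sum_mul, htot]
    ring
  have hv0 : 0 ≤ v := by
    have : (0:ℝ) < (v:ℝ) := by rw [hvR]; positivity
    exact_mod_cast le_of_lt this
  have hvt : v < (D:ℤ)^t := by
    have : (v:ℝ) < ((D:ℤ)^t:ℝ) := by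
      rw [hvR, htcast]
      exact mul_lt_mul_of_pos_right hr1 hDM
    exact_mod_cast this
  have hsum : ∑ j ∈ N, (D:ℤ)^(a j) = v + x * (D:ℤ)^t := by rw [hv]; ring
  obtain ⟨R, hRN, hRsum⟩ := key D hD N.card N rfl a t v x hv0 hvt hsum
  refine ⟨R, hRN, ?_⟩
  have h2 : (∑ j ∈ R, (D:ℝ)^(e j)) * (D:ℝ)^(M:ℤ) = r * (D:ℝ)^(M:ℤ) := by
    calc (∑ j ∈ R, (D:ℝ)^(e j)) * (D:ℝ)^(M:ℤ)
        = ∑ j ∈ R, ((D:ℤ)^(a j) : ℝ) := by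
          rw [Finset.sum_mul]
          exact Finset.sum_congr rfl (fun j hj => (hcast j (hRN hj)).symm)
      _ = ((∑ j ∈ R, (D:ℤ)^(a j) : ℤ):ℝ) := by push_cast; ring
      _ = (v:ℝ) := by rw [hRsum]
      _ = r * (D:ℝ)^(M:ℤ) := hvR
  exact mul_right_cancel₀ (ne_of_gt hDM) h2
end

section
/- Let ρ_t = ((n − D^{l_min})/(D−1))·D^{−l_min}. Any subset N ⊆ I that minimizes μ(N) among all subsets of I with ρ(N) = ρ_t is the nodeset of a length vector: there exists a length vector l^N with η(l^N) = N. Moreover, μ(N) = min_{l feasible} Σ_{i=1}^n p_i·φ(l_i − l_min) − φ(0)·Σ_{i=1}^n p_i, where the minimum is over all feasible length vectors; in particular the length vector l^N minimizes the penalty among all feasible length vectors. -/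
/-- The node grid `I = {1,…,n} × {l_min+1,…,l_max}`. -/
def grid (n lmin lmax : ℕ) : Finset (ℕ × ℕ) :=
  Finset.Icc 1 n ×ˢ Finset.Icc (lmin + 1) lmax

/-- The width `ρ(N) = Σ_{(i,l)∈N} D^{−l}` of a set of nodes. -/
noncomputable def nwidth (D : ℕ) (N : Finset (ℕ × ℕ)) : ℝ :=
  ∑ q ∈ N, (D : ℝ) ^ (-(q.2 : ℤ))

/-- The weight `μ(N) = Σ_{(i,l)∈N} p_i·(φ(l−l_min) − φ(l−l_min−1))` of a set of nodes. -/
noncomputable def nweight (D lmin : ℕ) (p : ℕ → ℝ) (φ : ℝ → ℝ)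
    (N : Finset (ℕ × ℕ)) : ℝ :=
  ∑ q ∈ N, p q.1 * (φ ((q.2 : ℝ) - lmin) - φ ((q.2 : ℝ) - lmin - 1))

/-- The Kraft sum `κ(l) = Σ_{i=1}^n D^{−l_i}` of a length vector. -/
noncomputable def kraft (D n : ℕ) (l : ℕ → ℕ) : ℝ :=
  ∑ i ∈ Finset.Icc 1 n, (D : ℝ) ^ (-(l i : ℤ))

/-- The penalty `Σ_{i=1}^n p_i·φ(l_i − l_min)` of a length vector. -/
noncomputable def penalty (n lmin : ℕ) (p : ℕ → ℝ) (φ : ℝ → ℝ) (l : ℕ → ℕ) : ℝ :=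
  ∑ i ∈ Finset.Icc 1 n, p i * φ ((l i : ℝ) - lmin)

/-- The nodeset `η(l) = {(i,l′) ∈ I : l′ ≤ l_i}` of a length vector. -/
def nodeset (n lmin lmax : ℕ) (l : ℕ → ℕ) : Finset (ℕ × ℕ) :=
  (grid n lmin lmax).filter (fun q => q.2 ≤ l q.1)

/-! ### Auxiliary lemmas -/

lemma PM.pow_dvd_of_le_weight {D : ℕ} (hD : 2 ≤ D) {a b : ℕ} (ha : ∃ k, a = D ^ k)
    (hb : ∃ k, b = D ^ k) (hab : a ≤ b) : a ∣ b := by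
  obtain ⟨k, rfl⟩ := ha; obtain ⟨j, rfl⟩ := hb
  exact pow_dvd_pow D ((Nat.pow_le_pow_iff_right (by omega)).1 hab)

lemma PM.greedy_subset {α : Type*} [DecidableEq α] {D : ℕ} (hD : 2 ≤ D) (w : α → ℕ) :
    ∀ T : ℕ, ∀ F : Finset α, (∀ a ∈ F, ∃ k, w a = D ^ k) → (∀ a ∈ F, w a ∣ T) →
      T ≤ ∑ a ∈ F, w a → ∃ E ⊆ F, ∑ a ∈ E, w a = T := by
  intro T
  induction T using Nat.strong_induction_on with
  | _ T ih =>
    intro F hpow hdvd hsum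
    rcases Nat.eq_zero_or_pos T with rfl | hT
    · exact ⟨∅, Finset.empty_subset _, by simp⟩
    · have hFne : F.Nonempty := by
        by_contra h
        rw [Finset.not_nonempty_iff_eq_empty] at h
        subst h; simp at hsum; omega
      obtain ⟨a, haF, hamax⟩ := Finset.exists_max_image F w hFne
      have hwa_pos : 0 < w a := by
        obtain ⟨k, hk⟩ := hpow a haF; rw [hk]; positivity
      have hwaT : w a ≤ T := Nat.le_of_dvd hT (hdvd a haF)
      have hlt : T - w a < T := by omega
      have hsum' : T - w a ≤ ∑ b ∈ F.erase a, w b := by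
        have := Finset.add_sum_erase F w haF
        omega
      obtain ⟨E', hE'sub, hE'sum⟩ := ih (T - w a) hlt (F.erase a)
        (fun b hb => hpow b (Finset.mem_of_mem_erase hb))
        (fun b hb => by
          have hbF := Finset.mem_of_mem_erase hb
          exact Nat.dvd_sub (hdvd b hbF)
            (PM.pow_dvd_of_le_weight hD (hpow b hbF) (hpow a haF) (hamax b hbF)))
        hsum'
      refine ⟨insert a E', ?_, ?_⟩
      · intro x hx
        rcases Finset.mem_insert.1 hx with rfl | hx
        · exact haF
        · exact Finset.mem_of_mem_erase (hE'sub hx)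
      · have haE' : a ∉ E' := fun h => (Finset.mem_erase.1 (hE'sub h)).1 rfl
        rw [Finset.sum_insert haE', hE'sum]; omega

lemma PM.greedy_subset_mem {α : Type*} [DecidableEq α] {D : ℕ} (hD : 2 ≤ D) (w : α → ℕ)
    {T : ℕ} {F : Finset α} {a0 : α} (ha0 : a0 ∈ F)
    (hpow : ∀ a ∈ F, ∃ k, w a = D ^ k) (hdvd : ∀ a ∈ F, w a ∣ T)
    (hmax : ∀ a ∈ F, w a ≤ w a0) (hsum : T ≤ ∑ a ∈ F, w a) (hT : 0 < T) :
    ∃ E ⊆ F, a0 ∈ E ∧ ∑ a ∈ E, w a = T := by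
  have hwaT : w a0 ≤ T := Nat.le_of_dvd hT (hdvd a0 ha0)
  have hsum' : T - w a0 ≤ ∑ b ∈ F.erase a0, w b := by
    have := Finset.add_sum_erase F w ha0; omega
  obtain ⟨E', hE'sub, hE'sum⟩ := PM.greedy_subset hD w (T - w a0) (F.erase a0)
    (fun b hb => hpow b (Finset.mem_of_mem_erase hb))
    (fun b hb => by
      have hbF := Finset.mem_of_mem_erase hb
      exact Nat.dvd_sub (hdvd b hbF)
        (PM.pow_dvd_of_le_weight hD (hpow b hbF) (hpow a0 ha0) (hmax b hbF)))
    hsum'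
  have haE' : a0 ∉ E' := fun h => (Finset.mem_erase.1 (hE'sub h)).1 rfl
  refine ⟨insert a0 E', ?_, Finset.mem_insert_self _ _, ?_⟩
  · intro x hx
    rcases Finset.mem_insert.1 hx with rfl | hx
    · exact ha0
    · exact Finset.mem_of_mem_erase (hE'sub hx)
  · rw [Finset.sum_insert haE', hE'sum]; omega

lemma PM.zpow_neg_nat_eq {D : ℕ} (hD : 2 ≤ D) {t lmax : ℕ} (ht : t ≤ lmax) :
    (D : ℝ) ^ (-(t : ℤ)) = ((D ^ (lmax - t) : ℕ) : ℝ) * (D : ℝ) ^ (-(lmax : ℤ)) := by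
  have hD0 : (D : ℝ) ≠ 0 := by positivity
  push_cast
  rw [← zpow_natCast (D : ℝ) (lmax - t), ← zpow_add₀ hD0]
  congr 1
  omega

lemma PM.nwidth_nat {D : ℕ} (hD : 2 ≤ D) {lmax : ℕ} {N : Finset (ℕ × ℕ)}
    (hsub : ∀ q ∈ N, q.2 ≤ lmax) :
    nwidth D N = ((∑ q ∈ N, D ^ (lmax - q.2) : ℕ) : ℝ) * (D : ℝ) ^ (-(lmax : ℤ)) := by
  rw [nwidth, Nat.cast_sum, Finset.sum_mul]
  exact Finset.sum_congr rfl fun q hq => PM.zpow_neg_nat_eq hD (hsub q hq)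

lemma PM.kraft_nat {D n : ℕ} (hD : 2 ≤ D) {lmax : ℕ} {l : ℕ → ℕ}
    (hl : ∀ i ∈ Finset.Icc 1 n, l i ≤ lmax) :
    kraft D n l =
      ((∑ i ∈ Finset.Icc 1 n, D ^ (lmax - l i) : ℕ) : ℝ) * (D : ℝ) ^ (-(lmax : ℤ)) := by
  rw [kraft, Nat.cast_sum, Finset.sum_mul]
  exact Finset.sum_congr rfl fun i hi => PM.zpow_neg_nat_eq hD (hl i hi)

lemma PM.target_nat {D lmin lmax n : ℕ} (hD : 2 ≤ D) (hlm : lmin ≤ lmax) {k : ℕ}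
    (hk : (D - 1) * k = n - D ^ lmin) (hn1 : D ^ lmin < n) :
    (((n : ℝ) - (D : ℝ) ^ lmin) / ((D : ℝ) - 1)) * (D : ℝ) ^ (-(lmin : ℤ)) =
      ((k * D ^ (lmax - lmin) : ℕ) : ℝ) * (D : ℝ) ^ (-(lmax : ℤ)) := by
  have hD0 : (D : ℝ) ≠ 0 := by positivity
  have hD1 : (D : ℝ) - 1 ≠ 0 := by
    have h2 : (2:ℝ) ≤ D := by exact_mod_cast hD
    nlinarith
  have hkr : (n : ℝ) - (D : ℝ) ^ lmin = ((D : ℝ) - 1) * k := by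
    have h1 : ((D - 1) * k : ℕ) = ((n - D ^ lmin : ℕ) : ℕ) := hk
    have h2 : ((D:ℝ) - 1) * k = ((n:ℝ) - (D:ℝ)^lmin) := by
      have h3 := congrArg (fun m : ℕ => (m : ℝ)) h1
      push_cast [Nat.cast_sub (le_of_lt hn1),
        Nat.cast_sub (Nat.one_le_iff_ne_zero.2 (by omega) : 1 ≤ D)] at h3
      linarith [h3]
    linarith
  rw [hkr, mul_comm ((D:ℝ)-1) (k:ℝ), mul_div_assoc, div_self hD1, mul_one]
  push_cast
  rw [← zpow_natCast (D : ℝ) (lmax - lmin), mul_assoc, ← zpow_add₀ hD0]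
  congr 2
  omega

lemma PM.nodeset_sum {M : Type*} [AddCommMonoid M] {n lmin lmax : ℕ} {lv : ℕ → ℕ}
    (hlv : ∀ i ∈ Finset.Icc 1 n, lv i ≤ lmax) (f : ℕ × ℕ → M) :
    ∑ q ∈ nodeset n lmin lmax lv, f q =
      ∑ i ∈ Finset.Icc 1 n, ∑ t ∈ Finset.Icc (lmin + 1) (lv i), f (i, t) := by
  rw [nodeset, grid, Finset.sum_filter, Finset.sum_product]
  refine Finset.sum_congr rfl fun i hi => ?_
  rw [← Finset.sum_filter]
  congr 1
  ext t
  simp only [Finset.mem_filter, Finset.mem_Icc]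
  have := hlv i hi
  omega

lemma PM.telescope_phi (φ : ℝ → ℝ) (lmin : ℕ) :
    ∀ L : ℕ, lmin ≤ L →
      ∑ t ∈ Finset.Icc (lmin + 1) L, (φ ((t : ℝ) - lmin) - φ ((t : ℝ) - lmin - 1)) =
        φ ((L : ℝ) - lmin) - φ 0 := by
  intro L hL
  induction L, hL using Nat.le_induction with
  | base => simp
  | succ L hL ih =>
    rw [← Finset.insert_Icc_right_eq_Icc_add_one (by omega), Finset.sum_insert (by simp)]
    rw [ih]
    have h1 : ((L + 1 : ℕ) : ℝ) - lmin - 1 = (L : ℝ) - lmin := by push_cast; ring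
    rw [h1]
    ring

lemma PM.geom_nat {D : ℕ} (hD : 2 ≤ D) (lmin lmax : ℕ) :
    ∀ a : ℕ, lmin ≤ a → a ≤ lmax →
      (D - 1) * (∑ t ∈ Finset.Icc (lmin + 1) a, D ^ (lmax - t)) + D ^ (lmax - a) =
        D ^ (lmax - lmin) := by
  intro a ha
  induction a, ha using Nat.le_induction with
  | base => simp
  | succ a ha ih =>
    intro hle
    rw [← Finset.insert_Icc_right_eq_Icc_add_one (by omega), Finset.sum_insert (by simp)]
    have h1 : D ^ (lmax - a) = D * D ^ (lmax - (a + 1)) := by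
      rw [← pow_succ']
      congr 1
      omega
    have h3 := ih (by omega)
    have h2 : (D - 1) * D ^ (lmax - (a + 1)) + D ^ (lmax - (a + 1))
        = D * D ^ (lmax - (a + 1)) := by
      cases D with
      | zero => omega
      | succ D => simp [Nat.succ_sub_one]; ring
    rw [Nat.mul_add]
    omega

lemma PM.nat_sub_one_dvd_pow_sub_one (D e : ℕ) : (D - 1) ∣ (D ^ e - 1) := by
  simpa using Nat.sub_dvd_pow_sub_pow D 1 e

lemma PM.slope_le {φ : ℝ → ℝ} (hconv : ConvexOn ℝ (Set.Ici 0) φ) {x : ℝ} (hx : 1 ≤ x) :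
    φ x - φ (x - 1) ≤ φ (x + 1) - φ x := by
  have h1 : (x - 1) ∈ Set.Ici (0:ℝ) := by simp; linarith
  have h2 : (x + 1) ∈ Set.Ici (0:ℝ) := by simp; linarith
  have h3 := hconv.2 h1 h2 (by norm_num : (0:ℝ) ≤ 1/2) (by norm_num : (0:ℝ) ≤ 1/2)
    (by norm_num)
  simp only [smul_eq_mul] at h3
  have harg : (1/2:ℝ) * (x-1) + (1/2) * (x+1) = x := by ring
  rw [harg] at h3
  linarith

lemma PM.kraft_complete {D lmin lmax n : ℕ} (hD : 2 ≤ D) (hlm : lmin ≤ lmax)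
    (hn1 : D ^ lmin < n) (hmod : (D - 1) ∣ (n - 1)) :
    ∀ m : ℕ, ∀ l' : ℕ → ℕ, (∀ i ∈ Finset.Icc 1 n, lmin ≤ l' i ∧ l' i ≤ lmax) →
      (∑ i ∈ Finset.Icc 1 n, D ^ (lmax - l' i)) ≤ D ^ lmax →
      (∑ i ∈ Finset.Icc 1 n, l' i) ≤ m →
      ∃ l'' : ℕ → ℕ, (∀ i ∈ Finset.Icc 1 n, lmin ≤ l'' i ∧ l'' i ≤ l' i) ∧
        (∑ i ∈ Finset.Icc 1 n, D ^ (lmax - l'' i)) = D ^ lmax := by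
  intro m
  induction m using Nat.strong_induction_on with
  | _ m ih =>
    intro l' hb hK hm
    rcases eq_or_lt_of_le hK with hEq | hlt
    · exact ⟨l', fun i hi => ⟨(hb i hi).1, le_refl _⟩, hEq⟩
    set K := ∑ i ∈ Finset.Icc 1 n, D ^ (lmax - l' i) with hKdef
    have hn : 1 ≤ n := le_trans (Nat.one_le_iff_ne_zero.2 (by positivity)) (le_of_lt hn1)
    have hne : (Finset.Icc 1 n).Nonempty := by
      rw [Finset.nonempty_Icc]; exact hn
    obtain ⟨i0, hi0, hmax⟩ := Finset.exists_max_image (Finset.Icc 1 n) l' hne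
    set L := l' i0 with hLdef
    have hLlmax : L ≤ lmax := (hb i0 hi0).2
    have hLgt : lmin < L := by
      by_contra h
      push_neg at h
      have hall : ∀ i ∈ Finset.Icc 1 n, l' i = lmin := fun i hi =>
        le_antisymm (le_trans (hmax i hi) (by omega)) (hb i hi).1
      have hKval : K = n * D ^ (lmax - lmin) := by
        rw [hKdef, Finset.sum_congr rfl (fun i hi => by rw [hall i hi]),
          Finset.sum_const, Nat.card_Icc, smul_eq_mul, Nat.add_sub_cancel]
      have hX : D ^ lmin * D ^ (lmax - lmin) = D ^ lmax := by
        rw [← pow_add]; congr 1; omega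
      have hXpos : 0 < D ^ (lmax - lmin) := by positivity
      nlinarith
    have hKn : n ≤ K := by
      calc n = ∑ _i ∈ Finset.Icc 1 n, 1 := by simp [Nat.card_Icc]
        _ ≤ K := Finset.sum_le_sum (fun i _ => Nat.one_le_iff_ne_zero.2 (by positivity))
    have hd1 : (D - 1) ∣ (K - n) := by
      have hs : K - n = ∑ i ∈ Finset.Icc 1 n, (D ^ (lmax - l' i) - 1) := by
        have h2 : ∑ i ∈ Finset.Icc 1 n, (D ^ (lmax - l' i) - 1 + 1) = K := by
          rw [hKdef]
          exact Finset.sum_congr rfl fun i _ => by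
            have h3 : 1 ≤ D ^ (lmax - l' i) := Nat.one_le_iff_ne_zero.2 (by positivity)
            omega
        rw [Finset.sum_add_distrib, Finset.sum_const, Nat.card_Icc, smul_eq_mul] at h2
        omega
      rw [hs]
      exact Finset.dvd_sum fun i _ => PM.nat_sub_one_dvd_pow_sub_one D _
    have hG1 : (D - 1) ∣ (D ^ lmax - K) := by
      have h1 : D ^ lmax - K = (D ^ lmax - 1) - ((n - 1) + (K - n)) := by
        have h3 : 1 ≤ D ^ lmax := Nat.one_le_iff_ne_zero.2 (by positivity)
        omega
      rw [h1]
      exact Nat.dvd_sub (PM.nat_sub_one_dvd_pow_sub_one D lmax) (Nat.dvd_add hmod hd1)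
    have hG2 : D ^ (lmax - L) ∣ (D ^ lmax - K) := by
      refine Nat.dvd_sub (pow_dvd_pow D (by omega)) ?_
      exact Finset.dvd_sum fun i hi => pow_dvd_pow D (by have := hmax i hi; omega)
    have hcop : Nat.Coprime (D - 1) (D ^ (lmax - L)) := by
      apply Nat.Coprime.pow_right
      have h : D - 1 + 1 = D := by omega
      rw [← h]
      simp
    have hGdvd : (D - 1) * D ^ (lmax - L) ∣ (D ^ lmax - K) :=
      hcop.mul_dvd_of_dvd_of_dvd hG1 hG2
    have hGpos : 0 < D ^ lmax - K := by omega
    have hGge : (D - 1) * D ^ (lmax - L) ≤ D ^ lmax - K := Nat.le_of_dvd hGpos hGdvd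
    set l2 := Function.update l' i0 (L - 1) with hl2def
    have hup : ∀ i ∈ Finset.Icc 1 n, i ≠ i0 → l2 i = l' i := fun i _ hne' => by
      rw [hl2def, Function.update_of_ne hne']
    have hupi0 : l2 i0 = L - 1 := by rw [hl2def, Function.update_self]
    have hsplit : ∀ g : ℕ → ℕ, ∑ i ∈ Finset.Icc 1 n, g (l2 i)
        = g (L - 1) + ∑ i ∈ (Finset.Icc 1 n).erase i0, g (l' i) := by
      intro g
      rw [← Finset.add_sum_erase _ _ hi0, hupi0]
      congr 1
      exact Finset.sum_congr rfl fun i hi =>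
        by rw [hup i (Finset.mem_of_mem_erase hi) (Finset.ne_of_mem_erase hi)]
    have hKsplit : K = D ^ (lmax - L)
        + ∑ i ∈ (Finset.Icc 1 n).erase i0, D ^ (lmax - l' i) := by
      rw [hKdef, ← Finset.add_sum_erase _ _ hi0]
    have hstep : D ^ (lmax - (L - 1)) = D * D ^ (lmax - L) := by
      rw [← pow_succ']
      congr 1
      omega
    have hsum2 : ∑ i ∈ Finset.Icc 1 n, D ^ (lmax - l2 i)
        = K + (D - 1) * D ^ (lmax - L) := by
      have h6 := hsplit (fun t => D ^ (lmax - t))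
      rw [h6, hstep]
      have hD1 : (D - 1) * D ^ (lmax - L) + D ^ (lmax - L) = D * D ^ (lmax - L) := by
        cases D with
        | zero => omega
        | succ D => simp [Nat.succ_sub_one]; ring
      omega
    have hK2 : ∑ i ∈ Finset.Icc 1 n, D ^ (lmax - l2 i) ≤ D ^ lmax := by omega
    have hb2 : ∀ i ∈ Finset.Icc 1 n, lmin ≤ l2 i ∧ l2 i ≤ lmax := by
      intro i hi
      rcases eq_or_ne i i0 with rfl | hne'
      · rw [hupi0]; omega
      · rw [hup i hi hne']; exact hb i hi
    have hsumL : L ≤ ∑ i ∈ Finset.Icc 1 n, l' i :=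
      Finset.single_le_sum (fun i _ => Nat.zero_le _) hi0
    have hm2 : ∑ i ∈ Finset.Icc 1 n, l2 i ≤ m - 1 := by
      have h7 := hsplit id
      simp only [id] at h7
      have h4 : ∑ i ∈ Finset.Icc 1 n, l' i
          = L + ∑ i ∈ (Finset.Icc 1 n).erase i0, l' i := by
        rw [← Finset.add_sum_erase _ _ hi0]
      omega
    obtain ⟨l'', hb'', hsum''⟩ := ih (m - 1) (by omega) l2 hb2 hK2 hm2
    refine ⟨l'', fun i hi => ⟨(hb'' i hi).1, ?_⟩, hsum''⟩
    rcases eq_or_ne i i0 with rfl | hne'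
    · have h5 := (hb'' i hi).2
      rw [hupi0] at h5
      omega
    · have h5 := (hb'' i hi).2
      rwa [hup i hi hne'] at h5

/-- Any subset `N ⊆ I` minimizing `μ(N)` among subsets of `I` of width
`ρ_t = ((n − D^{l_min})/(D−1))·D^{−l_min}` is the nodeset of a (feasible) length vector
`l^N`, which moreover minimizes the penalty among all feasible length vectors, and
`μ(N) = min_l Σ p_i φ(l_i − l_min) − φ(0)·Σ p_i`. -/
theorem statement1 (D lmin lmax n : ℕ) (hD : 2 ≤ D) (hlm : lmin < lmax)
    (hn1 : D ^ lmin < n) (hn2 : n ≤ D ^ lmax) (hmod : (D - 1) ∣ (n - 1))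
    (p : ℕ → ℝ) (hppos : ∀ i ∈ Finset.Icc 1 n, 0 < p i)
    (hpdec : ∀ i ∈ Finset.Icc 1 n, ∀ j ∈ Finset.Icc 1 n, i ≤ j → p j ≤ p i)
    (φ : ℝ → ℝ) (hconv : ConvexOn ℝ (Set.Ici 0) φ)
    (hmono : StrictMonoOn φ (Set.Ici 0))
    (hφnn : ∀ x ∈ Set.Ici (0 : ℝ), 0 ≤ φ x)
    (N : Finset (ℕ × ℕ)) (hNsub : N ⊆ grid n lmin lmax)
    (hNw : nwidth D N =
      (((n : ℝ) - (D : ℝ) ^ lmin) / ((D : ℝ) - 1)) * (D : ℝ) ^ (-(lmin : ℤ)))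
    (hNopt : ∀ M ⊆ grid n lmin lmax,
      nwidth D M =
        (((n : ℝ) - (D : ℝ) ^ lmin) / ((D : ℝ) - 1)) * (D : ℝ) ^ (-(lmin : ℤ)) →
      nweight D lmin p φ N ≤ nweight D lmin p φ M) :
    ∃ lv : ℕ → ℕ,
      (∀ i ∈ Finset.Icc 1 n, lmin ≤ lv i ∧ lv i ≤ lmax) ∧
      kraft D n lv ≤ 1 ∧
      nodeset n lmin lmax lv = N ∧
      (∀ l' : ℕ → ℕ, (∀ i ∈ Finset.Icc 1 n, lmin ≤ l' i ∧ l' i ≤ lmax) →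
        kraft D n l' ≤ 1 →
        penalty n lmin p φ lv ≤ penalty n lmin p φ l') ∧
      nweight D lmin p φ N =
        penalty n lmin p φ lv - φ 0 * ∑ i ∈ Finset.Icc 1 n, p i := by
  have hDne : (D : ℝ) ≠ 0 := by positivity
  have hzpos : (0:ℝ) < (D : ℝ) ^ (-(lmax : ℤ)) := by positivity
  have hzne : (D : ℝ) ^ (-(lmax : ℤ)) ≠ 0 := ne_of_gt hzpos
  -- the integer k with (D-1)*k = n - D^lmin
  have hdvd : (D - 1) ∣ (n - D ^ lmin) := by
    have h1 : (D - 1) ∣ (D ^ lmin - 1) := PM.nat_sub_one_dvd_pow_sub_one D lmin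
    have h0 : 1 ≤ D ^ lmin := Nat.one_le_iff_ne_zero.2 (by positivity)
    have h2 : n - D ^ lmin = (n - 1) - (D ^ lmin - 1) := by omega
    rw [h2]; exact Nat.dvd_sub hmod h1
  obtain ⟨k, hk⟩ := hdvd
  have hkk : (D - 1) * k = n - D ^ lmin := hk.symm
  set X := D ^ (lmax - lmin) with hXdef
  have hmemgrid : ∀ q : ℕ × ℕ, q ∈ grid n lmin lmax ↔
      (1 ≤ q.1 ∧ q.1 ≤ n ∧ lmin + 1 ≤ q.2 ∧ q.2 ≤ lmax) := by
    intro q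
    simp only [grid, Finset.mem_product, Finset.mem_Icc]
    tauto
  have hNle : ∀ q ∈ N, q.2 ≤ lmax := fun q hq => ((hmemgrid q).1 (hNsub hq)).2.2.2
  -- nat width of N
  have hTotN : (∑ q ∈ N, D ^ (lmax - q.2)) = k * X := by
    have h1 := PM.nwidth_nat hD hNle
    rw [h1, PM.target_nat hD (le_of_lt hlm) hkk hn1] at hNw
    have h2 := mul_right_cancel₀ hzne hNw
    exact_mod_cast h2
  -- optimality in nat form
  have hoptN : ∀ M ⊆ grid n lmin lmax, (∑ q ∈ M, D ^ (lmax - q.2)) = k * X →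
      nweight D lmin p φ N ≤ nweight D lmin p φ M := by
    intro M hM hMw
    apply hNopt M hM
    rw [PM.nwidth_nat hD (fun q hq => ((hmemgrid q).1 (hM hq)).2.2.2), hMw,
      PM.target_nat hD (le_of_lt hlm) hkk hn1]
  -- pointwise weight
  set μf : ℕ × ℕ → ℝ :=
    fun q => p q.1 * (φ ((q.2 : ℝ) - lmin) - φ ((q.2 : ℝ) - lmin - 1)) with hμfdef
  have hnwf : ∀ M : Finset (ℕ × ℕ), nweight D lmin p φ M = ∑ q ∈ M, μf q :=
    fun M => rfl
  have hwq_pos : ∀ q ∈ grid n lmin lmax, 0 < μf q := by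
    intro q hq
    obtain ⟨h1, h2, h3, h4⟩ := (hmemgrid q).1 hq
    have hp : 0 < p q.1 := hppos q.1 (Finset.mem_Icc.2 ⟨h1, h2⟩)
    have hx0 : (0:ℝ) ≤ (q.2 : ℝ) - lmin - 1 := by
      have : (lmin + 1 : ℝ) ≤ (q.2 : ℝ) := by exact_mod_cast h3
      linarith
    have hφlt : φ ((q.2 : ℝ) - lmin - 1) < φ ((q.2 : ℝ) - lmin) := by
      apply hmono hx0 (by simp only [Set.mem_Ici]; linarith)
      linarith
    rw [hμfdef]
    have : 0 < φ ((q.2 : ℝ) - lmin) - φ ((q.2 : ℝ) - lmin - 1) := by linarith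
    positivity
  have hwq_nonneg : ∀ q ∈ grid n lmin lmax, 0 ≤ μf q :=
    fun q hq => le_of_lt (hwq_pos q hq)
  -- THE EXCHANGE STEP: monotonicity of the optimal nodeset
  have hstepN : ∀ i l, (i, l + 1) ∈ N → lmin + 1 ≤ l → (i, l) ∈ N := by
    intro i l hmem hll
    by_contra hnot
    obtain ⟨hg1, hg2, hg3, hg4⟩ := (hmemgrid (i, l + 1)).1 (hNsub hmem)
    simp only at hg1 hg2 hg3 hg4
    have hil_grid : (i, l) ∈ grid n lmin lmax :=
      (hmemgrid (i, l)).2 ⟨hg1, hg2, hll, by omega⟩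
    set w : ℕ × ℕ → ℕ := fun q => D ^ (lmax - q.2) with hwdef
    set F := N.filter (fun q => l + 1 ≤ q.2) with hFdef
    have hmemF : (i, l + 1) ∈ F := Finset.mem_filter.2 ⟨hmem, le_refl _⟩
    set T := D ^ (lmax - l) with hTdef
    have hshallow : D ^ (lmax - l) ∣ ∑ q ∈ N.filter (fun q => ¬ (l + 1 ≤ q.2)), w q :=
      Finset.dvd_sum fun q hq => pow_dvd_pow D (by
        have := (Finset.mem_filter.1 hq).2
        simp only [not_le] at this
        omega)
    have hsplit : (∑ q ∈ F, w q) + (∑ q ∈ N.filter (fun q => ¬ (l + 1 ≤ q.2)), w q)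
        = k * X := by
      rw [← hTotN, hFdef]
      exact Finset.sum_filter_add_sum_filter_not N _ w
    have hdvdT_kX : T ∣ k * X := by
      have h1 : T ∣ X := pow_dvd_pow D (by omega)
      exact Dvd.dvd.mul_left h1 k
    have hdeep_dvd : T ∣ ∑ q ∈ F, w q := by
      have h1 : ∑ q ∈ F, w q = k * X - ∑ q ∈ N.filter (fun q => ¬ (l + 1 ≤ q.2)), w q := by
        omega
      rw [h1]
      exact Nat.dvd_sub hdvdT_kX hshallow
    have hdeep_pos : 0 < ∑ q ∈ F, w q := by
      have h1 : 0 < w (i, l + 1) := by rw [hwdef]; positivity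
      have h2 : w (i, l + 1) ≤ ∑ q ∈ F, w q :=
        Finset.single_le_sum (fun q _ => Nat.zero_le _) hmemF
      omega
    have hTle : T ≤ ∑ q ∈ F, w q := Nat.le_of_dvd hdeep_pos hdeep_dvd
    have hFdeep : ∀ q ∈ F, l + 1 ≤ q.2 ∧ q.2 ≤ lmax ∧ q ∈ N := fun q hq =>
      ⟨(Finset.mem_filter.1 hq).2, hNle q (Finset.mem_filter.1 hq).1,
        (Finset.mem_filter.1 hq).1⟩
    obtain ⟨E, hEF, hEmem, hEsum⟩ := PM.greedy_subset_mem hD w hmemF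
      (fun a _ => ⟨lmax - a.2, rfl⟩)
      (fun a ha => pow_dvd_pow D (by have := (hFdeep a ha).1; omega))
      (fun a ha => Nat.pow_le_pow_right (by omega) (by have := (hFdeep a ha).1; omega))
      hTle (by positivity)
    have hEN : E ⊆ N := hEF.trans (Finset.filter_subset _ _)
    have hilE : (i, l) ∉ N \ E := fun h => hnot (Finset.mem_sdiff.1 h).1
    set M := insert (i, l) (N \ E) with hMdef
    have hMsub : M ⊆ grid n lmin lmax := by
      intro q hq
      rcases Finset.mem_insert.1 hq with rfl | hq'
      · exact hil_grid
      · exact hNsub (Finset.mem_sdiff.1 hq').1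
    have hMw : ∑ q ∈ M, w q = k * X := by
      rw [hMdef, Finset.sum_insert hilE]
      have h1 : ∑ q ∈ N \ E, w q + ∑ q ∈ E, w q = ∑ q ∈ N, w q :=
        Finset.sum_sdiff hEN
      have h2 : w (i, l) = T := rfl
      have h3 : ∑ q ∈ N, w q = k * X := hTotN
      omega
    have hle := hoptN M hMsub hMw
    -- strict improvement: contradiction
    have hMweight : nweight D lmin p φ M
        = μf (i, l) + (nweight D lmin p φ N - nweight D lmin p φ E) := by
      rw [hnwf, hnwf, hnwf, hMdef, Finset.sum_insert hilE, Finset.sum_sdiff_eq_sub hEN]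
    -- E has at least one element besides (i, l+1)
    have hEcard : (E.erase (i, l + 1)).Nonempty := by
      rw [Finset.nonempty_iff_ne_empty]
      intro h
      have hE1 : E = {(i, l + 1)} := by
        apply Finset.eq_singleton_iff_unique_mem.2
        refine ⟨hEmem, fun x hx => ?_⟩
        by_contra hx'
        exact (Finset.notMem_empty x) (h ▸ Finset.mem_erase.2 ⟨hx', hx⟩)
      rw [hE1, Finset.sum_singleton] at hEsum
      have h2 : w (i, l + 1) < T := by
        rw [hwdef, hTdef]
        exact Nat.pow_lt_pow_right (by omega) (by omega)
      omega
    obtain ⟨q0, hq0⟩ := hEcard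
    have hq0E : q0 ∈ E := Finset.mem_of_mem_erase hq0
    have hq0grid : q0 ∈ grid n lmin lmax := hNsub (hEN hq0E)
    have hEw : μf (i, l + 1) + μf q0 ≤ nweight D lmin p φ E := by
      rw [hnwf, ← Finset.add_sum_erase E μf hEmem]
      have h2 : μf q0 ≤ ∑ q ∈ E.erase (i, l + 1), μf q :=
        Finset.single_le_sum
          (fun q hq => hwq_nonneg q (hNsub (hEN (Finset.mem_of_mem_erase hq)))) hq0
      linarith
    -- μf (i,l) ≤ μf (i,l+1) by convexity
    have hslope : μf (i, l) ≤ μf (i, l + 1) := by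
      have hp : 0 ≤ p i := le_of_lt (hppos i (Finset.mem_Icc.2 ⟨hg1, hg2⟩))
      have hx1 : (1:ℝ) ≤ (l : ℝ) - lmin := by
        have : (lmin + 1 : ℝ) ≤ (l : ℝ) := by exact_mod_cast hll
        linarith
      have hs := PM.slope_le hconv hx1
      have e1 : ((l + 1 : ℕ) : ℝ) - lmin = ((l : ℝ) - lmin) + 1 := by push_cast; ring
      have e2 : ((l + 1 : ℕ) : ℝ) - lmin - 1 = (l : ℝ) - lmin := by push_cast; ring
      have e3 : (l : ℝ) - lmin + 1 - 1 = (l : ℝ) - lmin := by ring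
      rw [hμfdef]
      simp only [e1, e2, e3]
      apply mul_le_mul_of_nonneg_left _ hp
      linarith
    have hq0pos : 0 < μf q0 := hwq_pos q0 hq0grid
    have : nweight D lmin p φ M < nweight D lmin p φ N := by
      rw [hMweight]
      linarith
    linarith
  -- full downward closedness
  have hmonoN : ∀ i t', lmin + 1 ≤ t' → ∀ t, t' ≤ t → (i, t) ∈ N → (i, t') ∈ N := by
    intro i t' ht' t htt
    induction t, htt using Nat.le_induction with
    | base => exact fun h => h
    | succ t ht ih => exact fun hmem => ih (hstepN i t hmem (by omega))
  -- construct the length vector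
  set lv : ℕ → ℕ :=
    fun i => lmin + ((Finset.Icc (lmin + 1) lmax).filter (fun t => (i, t) ∈ N)).card
    with hlvdef
  have hSet : ∀ i, ∀ t, (i, t) ∈ N → (lmin + 1 ≤ t ∧ t ≤ lv i) := by
    intro i t hmem
    have hgt := (hmemgrid (i, t)).1 (hNsub hmem)
    simp only at hgt
    set S := (Finset.Icc (lmin + 1) lmax).filter (fun t => (i, t) ∈ N) with hSdef
    have htS : t ∈ S := Finset.mem_filter.2
      ⟨Finset.mem_Icc.2 ⟨hgt.2.2.1, hgt.2.2.2⟩, hmem⟩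
    have hSne : S.Nonempty := ⟨t, htS⟩
    have hmS := S.max'_mem hSne
    have hmmem : (i, S.max' hSne) ∈ N := (Finset.mem_filter.1 hmS).2
    have hmIcc := Finset.mem_Icc.1 (Finset.mem_filter.1 hmS).1
    have hSIcc : S = Finset.Icc (lmin + 1) (S.max' hSne) := by
      ext u
      simp only [Finset.mem_Icc]
      constructor
      · intro hu
        exact ⟨(Finset.mem_Icc.1 (Finset.mem_filter.1 hu).1).1, S.le_max' u hu⟩
      · rintro ⟨hu1, hu2⟩
        exact Finset.mem_filter.2 ⟨Finset.mem_Icc.2 ⟨hu1, le_trans hu2 hmIcc.2⟩,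
          hmonoN i u hu1 _ hu2 hmmem⟩
    have hcard : S.card = S.max' hSne - lmin := by
      have h9 : S.card = (Finset.Icc (lmin + 1) (S.max' hSne)).card := by
        conv_lhs => rw [hSIcc]
      rw [Nat.card_Icc] at h9
      omega
    have hlvS : lv i = lmin + S.card := rfl
    have hlvi : lv i = S.max' hSne := by
      rw [hlvS, hcard]
      omega
    exact ⟨hgt.2.2.1, by rw [hlvi]; exact S.le_max' t htS⟩
  have hSet2 : ∀ i, 1 ≤ i → i ≤ n → ∀ t, lmin + 1 ≤ t → t ≤ lv i → (i, t) ∈ N := by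
    intro i hi1 hi2 t ht1 ht2
    set S := (Finset.Icc (lmin + 1) lmax).filter (fun t => (i, t) ∈ N) with hSdef
    have hlvS : lv i = lmin + S.card := rfl
    rcases S.eq_empty_or_nonempty with hS | hSne
    · exfalso
      have h10 : lv i = lmin := by rw [hlvS, hS, Finset.card_empty]; omega
      omega
    · have hmS := S.max'_mem hSne
      have hmmem : (i, S.max' hSne) ∈ N := (Finset.mem_filter.1 hmS).2
      have hlvi : lv i = S.max' hSne := by
        have hmIcc := Finset.mem_Icc.1 (Finset.mem_filter.1 hmS).1
        have hSIcc : S = Finset.Icc (lmin + 1) (S.max' hSne) := by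
          ext u
          simp only [Finset.mem_Icc]
          constructor
          · intro hu
            exact ⟨(Finset.mem_Icc.1 (Finset.mem_filter.1 hu).1).1, S.le_max' u hu⟩
          · rintro ⟨hu1, hu2⟩
            exact Finset.mem_filter.2 ⟨Finset.mem_Icc.2 ⟨hu1, le_trans hu2 hmIcc.2⟩,
              hmonoN i u hu1 _ hu2 hmmem⟩
        have h9 : S.card = (Finset.Icc (lmin + 1) (S.max' hSne)).card := by
          conv_lhs => rw [hSIcc]
        rw [Nat.card_Icc] at h9
        rw [hlvS]
        omega
      exact hmonoN i t ht1 _ (by omega) hmmem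
  have hlvbounds : ∀ i ∈ Finset.Icc 1 n, lmin ≤ lv i ∧ lv i ≤ lmax := by
    intro i _
    have hlvS : lv i
        = lmin + ((Finset.Icc (lmin + 1) lmax).filter (fun t => (i, t) ∈ N)).card := rfl
    have h1 := Finset.card_filter_le (Finset.Icc (lmin + 1) lmax)
      (fun t => (i, t) ∈ N)
    rw [Nat.card_Icc] at h1
    omega
  have hnodeset : nodeset n lmin lmax lv = N := by
    ext q
    simp only [nodeset, Finset.mem_filter]
    constructor
    · rintro ⟨hg, hle'⟩
      obtain ⟨h1, h2, h3, h4⟩ := (hmemgrid q).1 hg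
      exact hSet2 q.1 h1 h2 q.2 h3 hle'
    · intro hq
      exact ⟨hNsub hq, (hSet q.1 q.2 hq).2⟩
  -- geometric identity for nodesets
  have hgeo : ∀ lv' : ℕ → ℕ, (∀ i ∈ Finset.Icc 1 n, lmin ≤ lv' i ∧ lv' i ≤ lmax) →
      (D - 1) * (∑ q ∈ nodeset n lmin lmax lv', D ^ (lmax - q.2))
        + (∑ i ∈ Finset.Icc 1 n, D ^ (lmax - lv' i)) = n * X := by
    intro lv' hb
    rw [PM.nodeset_sum (fun i hi => (hb i hi).2) (fun q => D ^ (lmax - q.2)),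
      Finset.mul_sum, ← Finset.sum_add_distrib]
    rw [Finset.sum_congr rfl
      (fun i hi => PM.geom_nat hD lmin lmax (lv' i) (hb i hi).1 (hb i hi).2)]
    rw [Finset.sum_const, Nat.card_Icc, smul_eq_mul, Nat.add_sub_cancel, hXdef]
  have hKnat : ∑ i ∈ Finset.Icc 1 n, D ^ (lmax - lv i) = D ^ lmax := by
    have h1 := hgeo lv hlvbounds
    rw [hnodeset, hTotN] at h1
    have h2 : (D - 1) * (k * X) = (n - D ^ lmin) * X := by
      rw [← mul_assoc, hkk]
    have h3 : (n - D ^ lmin) * X + D ^ lmin * X = n * X := by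
      rw [← Nat.add_mul]
      congr 1
      omega
    have h4 : D ^ lmin * X = D ^ lmax := by
      rw [hXdef, ← pow_add]
      congr 1
      omega
    omega
  have hkraft1 : kraft D n lv = 1 := by
    rw [PM.kraft_nat hD (fun i hi => (hlvbounds i hi).2), hKnat]
    push_cast
    rw [← zpow_natCast (D : ℝ) lmax, ← zpow_add₀ hDne]
    simp
  -- weight of a nodeset equals penalty minus constant
  have hwid : ∀ lv' : ℕ → ℕ, (∀ i ∈ Finset.Icc 1 n, lmin ≤ lv' i ∧ lv' i ≤ lmax) →
      nweight D lmin p φ (nodeset n lmin lmax lv')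
        = penalty n lmin p φ lv' - φ 0 * ∑ i ∈ Finset.Icc 1 n, p i := by
    intro lv' hb
    rw [hnwf, PM.nodeset_sum (fun i hi => (hb i hi).2) μf, penalty,
      Finset.mul_sum, ← Finset.sum_sub_distrib]
    refine Finset.sum_congr rfl fun i hi => ?_
    rw [hμfdef]
    simp only
    rw [← Finset.mul_sum, PM.telescope_phi φ lmin (lv' i) (hb i hi).1]
    ring
  -- the optimality over feasible length vectors
  have hopt_pen : ∀ l' : ℕ → ℕ, (∀ i ∈ Finset.Icc 1 n, lmin ≤ l' i ∧ l' i ≤ lmax) →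
      kraft D n l' ≤ 1 → penalty n lmin p φ lv ≤ penalty n lmin p φ l' := by
    intro l' hb' hk'
    have hKle : ∑ i ∈ Finset.Icc 1 n, D ^ (lmax - l' i) ≤ D ^ lmax := by
      rw [PM.kraft_nat hD (fun i hi => (hb' i hi).2)] at hk'
      have h1 : ((∑ i ∈ Finset.Icc 1 n, D ^ (lmax - l' i) : ℕ) : ℝ)
          ≤ ((D ^ lmax : ℕ) : ℝ) := by
        have h2 : ((D ^ lmax : ℕ) : ℝ) * (D : ℝ) ^ (-(lmax : ℤ)) = 1 := by
          push_cast
          rw [← zpow_natCast (D : ℝ) lmax, ← zpow_add₀ hDne]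
          simp
        by_contra h3
        push_neg at h3
        have h4 := mul_lt_mul_of_pos_right h3 hzpos
        rw [h2] at h4
        linarith
      exact_mod_cast h1
    obtain ⟨l'', hb'', hKeq⟩ := PM.kraft_complete hD (le_of_lt hlm) hn1 hmod
      (∑ i ∈ Finset.Icc 1 n, l' i) l' hb' hKle (le_refl _)
    have hb''2 : ∀ i ∈ Finset.Icc 1 n, lmin ≤ l'' i ∧ l'' i ≤ lmax := fun i hi =>
      ⟨(hb'' i hi).1, le_trans (hb'' i hi).2 (hb' i hi).2⟩
    have hMw : ∑ q ∈ nodeset n lmin lmax l'', D ^ (lmax - q.2) = k * X := by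
      have h1 := hgeo l'' hb''2
      rw [hKeq] at h1
      have h2 : (D - 1) * (k * X) = (n - D ^ lmin) * X := by rw [← mul_assoc, hkk]
      have h3 : (n - D ^ lmin) * X + D ^ lmin * X = n * X := by
        rw [← Nat.add_mul]; congr 1; omega
      have h4 : D ^ lmin * X = D ^ lmax := by
        rw [hXdef, ← pow_add]; congr 1; omega
      have h5 : (D - 1) * (∑ q ∈ nodeset n lmin lmax l'', D ^ (lmax - q.2))
          = (D - 1) * (k * X) := by omega
      exact Nat.eq_of_mul_eq_mul_left (by omega) h5
    have h6 := hoptN (nodeset n lmin lmax l'') (Finset.filter_subset _ _) hMw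
    rw [hwid l'' hb''2] at h6
    have h7 := hwid lv hlvbounds
    rw [hnodeset] at h7
    have hpen_le : penalty n lmin p φ l'' ≤ penalty n lmin p φ l' := by
      refine Finset.sum_le_sum fun i hi => ?_
      have hp := hppos i hi
      have hmle : φ ((l'' i : ℝ) - lmin) ≤ φ ((l' i : ℝ) - lmin) := by
        have hm1 : ((l'' i : ℝ) - lmin) ∈ Set.Ici (0:ℝ) := by
          simp only [Set.mem_Ici, sub_nonneg]
          exact_mod_cast (hb'' i hi).1
        have hm2 : ((l' i : ℝ) - lmin) ∈ Set.Ici (0:ℝ) := by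
          simp only [Set.mem_Ici, sub_nonneg]
          exact_mod_cast (hb' i hi).1
        apply (hmono.monotoneOn) hm1 hm2
        have : (l'' i : ℝ) ≤ (l' i : ℝ) := by exact_mod_cast (hb'' i hi).2
        linarith
      exact mul_le_mul_of_nonneg_left hmle (le_of_lt hp)
    linarith
  refine ⟨lv, hlvbounds, le_of_eq hkraft1, hnodeset, hopt_pen, ?_⟩
  have h7 := hwid lv hlvbounds
  rw [hnodeset] at h7
  exact h7
end

section
/- Every length vector that minimizes the penalty Σ_{i=1}^n p_i·φ(l_i − l_min) among all feasible length vectors satisfies the Kraft inequality with equality, κ(l) = 1. (Otherwise a longest codeword could be shortened by one, strictly decreasing the penalty without violating the Kraft inequality.) -/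
/-- Every length vector that minimizes the penalty among all feasible
length vectors satisfies the Kraft inequality with equality, κ(l) = 1. -/
theorem statement4 (D lmin lmax n : ℕ) (hD : 2 ≤ D) (hlm : lmin < lmax)
    (hn1 : D ^ lmin < n) (hn2 : n ≤ D ^ lmax) (hmod : (D - 1) ∣ (n - 1))
    (p : ℕ → ℝ) (hppos : ∀ i ∈ Finset.Icc 1 n, 0 < p i)
    (hpdec : ∀ i ∈ Finset.Icc 1 n, ∀ j ∈ Finset.Icc 1 n, i ≤ j → p j ≤ p i)
    (φ : ℝ → ℝ) (hconv : ConvexOn ℝ (Set.Ici 0) φ)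
    (hmono : StrictMonoOn φ (Set.Ici 0))
    (hφnn : ∀ x ∈ Set.Ici (0 : ℝ), 0 ≤ φ x)
    (l : ℕ → ℕ) (hl : ∀ i ∈ Finset.Icc 1 n, lmin ≤ l i ∧ l i ≤ lmax)
    (hfeas : kraft D n l ≤ 1)
    (hopt : ∀ l' : ℕ → ℕ, (∀ i ∈ Finset.Icc 1 n, lmin ≤ l' i ∧ l' i ≤ lmax) →
      kraft D n l' ≤ 1 →
      penalty n lmin p φ l ≤ penalty n lmin p φ l') :
    kraft D n l = 1 := by
  classical
  by_contra hne
  have hlt : kraft D n l < 1 := lt_of_le_of_ne hfeas hne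
  have hD0 : (0:ℝ) < (D:ℝ) := by
    have : (0:ℕ) < D := by omega
    exact_mod_cast this
  have hDne : (D:ℝ) ≠ 0 := ne_of_gt hD0
  have hn0 : 1 ≤ n := by
    have : 1 ≤ D ^ lmin := Nat.one_le_pow _ _ (by omega)
    omega
  set S := Finset.Icc 1 n with hS
  have hSne : S.Nonempty := ⟨1, by simp [hS]; omega⟩
  obtain ⟨i, hiS, himax⟩ := S.exists_max_image l hSne
  set L := l i with hL
  have hbounds := hl i hiS
  -- lmin < L
  have hLmin : lmin < L := by
    by_contra hc
    push_neg at hc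
    have hall : ∀ j ∈ S, l j = lmin :=
      fun j hj => le_antisymm (le_trans (himax j hj) hc) (hl j hj).1
    have hk : kraft D n l = n * (D:ℝ) ^ (-(lmin:ℤ)) := by
      unfold kraft
      rw [Finset.sum_congr rfl (fun j hj => by rw [hall j hj])]
      rw [Finset.sum_const, Nat.card_Icc]
      simp
    have hpow : (0:ℝ) < (D:ℝ) ^ (lmin:ℕ) := by positivity
    have hgt : (1:ℝ) < n * (D:ℝ) ^ (-(lmin:ℤ)) := by
      rw [zpow_neg, zpow_natCast, ← div_eq_mul_inv, lt_div_iff₀ hpow, one_mul]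
      exact_mod_cast hn1
    rw [hk] at hfeas
    linarith
  have hL1 : 1 ≤ L := by omega
  -- integer k
  set k : ℕ := ∑ j ∈ S, D ^ (L - l j) with hk
  have hcast : kraft D n l = (k : ℝ) * (D:ℝ) ^ (-(L:ℤ)) := by
    unfold kraft
    rw [hk]
    push_cast
    rw [Finset.sum_mul]
    refine Finset.sum_congr rfl fun j hj => ?_
    have hjle : l j ≤ L := himax j hj
    rw [← zpow_natCast (D:ℝ) (L - l j), ← zpow_add₀ hDne]
    congr 1
    omega
  -- k < D^L
  have hkDL : (k:ℤ) < (D:ℤ) ^ L := by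
    have hpow : (0:ℝ) < (D:ℝ) ^ (L:ℤ) := zpow_pos hD0 _
    have : (k:ℝ) < (D:ℝ) ^ (L:ℕ) := by
      have := hlt
      rw [hcast, zpow_neg] at this
      rw [mul_inv_lt_iff₀ (zpow_pos hD0 _), one_mul] at this
      calc (k:ℝ) < (D:ℝ) ^ (L:ℤ) := this
        _ = (D:ℝ) ^ (L:ℕ) := zpow_natCast _ _
    exact_mod_cast this
  -- divisibility: (D-1 : ℤ) ∣ D^L - k
  have hdvd : ((D:ℤ) - 1) ∣ ((D:ℤ) ^ L - (k:ℤ)) := by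
    have h1 : ((D:ℤ) - 1) ∣ ((k:ℤ) - (n:ℤ)) := by
      have : ((k:ℤ) - (n:ℤ)) = ∑ j ∈ S, ((D:ℤ) ^ (L - l j) - 1) := by
        rw [Finset.sum_sub_distrib, Finset.sum_const, hS, Nat.card_Icc, hk]
        push_cast
        ring
      rw [this]
      exact Finset.dvd_sum fun j hj => by
        simpa using sub_dvd_pow_sub_pow (D:ℤ) 1 (L - l j)
    have h2 : ((D:ℤ) - 1) ∣ ((n:ℤ) - 1) := by
      have := Int.natCast_dvd_natCast.mpr hmod
      push_cast [Nat.cast_sub (by omega : 1 ≤ D), Nat.cast_sub hn0] at this ⊢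
      convert this using 2 <;> push_cast [Nat.cast_sub (by omega : 1 ≤ D), Nat.cast_sub hn0] <;> ring
    have h3 : ((D:ℤ) - 1) ∣ ((D:ℤ) ^ L - 1) := by
      simpa using sub_dvd_pow_sub_pow (D:ℤ) 1 L
    have : (D:ℤ) ^ L - (k:ℤ) = ((D:ℤ) ^ L - 1) - ((n:ℤ) - 1) - ((k:ℤ) - (n:ℤ)) := by ring
    rw [this]
    exact dvd_sub (dvd_sub h3 h2) h1
  have hgap : (k:ℤ) + ((D:ℤ) - 1) ≤ (D:ℤ) ^ L := by
    have := Int.le_of_dvd (by omega) hdvd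
    omega
  -- new vector
  set l' : ℕ → ℕ := Function.update l i (L - 1) with hl'
  have hl'i : l' i = L - 1 := Function.update_self _ _ _
  have hl'j : ∀ j, j ≠ i → l' j = l j := fun j hj => Function.update_of_ne hj _ _
  have hbnd' : ∀ j ∈ Finset.Icc 1 n, lmin ≤ l' j ∧ l' j ≤ lmax := by
    intro j hj
    by_cases hji : j = i
    · subst hji; rw [hl'i]; omega
    · rw [hl'j j hji]; exact hl j hj
  -- kraft of l'
  have hkraft' : kraft D n l' = kraft D n l + ((D:ℝ) - 1) * (D:ℝ) ^ (-(L:ℤ)) := by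
    unfold kraft
    rw [← Finset.add_sum_erase _ _ hiS, ← Finset.add_sum_erase _ (fun j => (D:ℝ)^(-(l j:ℤ))) hiS]
    have htail : ∑ j ∈ S.erase i, (D:ℝ) ^ (-(l' j:ℤ)) = ∑ j ∈ S.erase i, (D:ℝ) ^ (-(l j:ℤ)) :=
      Finset.sum_congr rfl fun j hj => by rw [hl'j j (Finset.ne_of_mem_erase hj)]
    rw [htail, hl'i]
    have hcastL : ((L - 1 : ℕ) : ℤ) = (L:ℤ) - 1 := by omega
    rw [hcastL, ← hL]
    have : (D:ℝ) ^ (-((L:ℤ) - 1)) = (D:ℝ) * (D:ℝ) ^ (-(L:ℤ)) := by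
      rw [show -((L:ℤ) - 1) = -(L:ℤ) + 1 by ring, zpow_add₀ hDne, zpow_one]
      ring
    rw [this]
    ring
  have hfeas' : kraft D n l' ≤ 1 := by
    rw [hkraft', hcast]
    have hgapR : (k:ℝ) + ((D:ℝ) - 1) ≤ (D:ℝ) ^ (L:ℕ) := by exact_mod_cast hgap
    have hpow : (0:ℝ) < (D:ℝ) ^ (-(L:ℤ)) := zpow_pos hD0 _
    have : ((k:ℝ) + ((D:ℝ) - 1)) * (D:ℝ) ^ (-(L:ℤ)) ≤ (D:ℝ) ^ (L:ℕ) * (D:ℝ) ^ (-(L:ℤ)) :=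
      mul_le_mul_of_nonneg_right hgapR (le_of_lt hpow)
    have heq : (D:ℝ) ^ (L:ℕ) * (D:ℝ) ^ (-(L:ℤ)) = 1 := by
      rw [← zpow_natCast (D:ℝ) L, ← zpow_add₀ hDne]
      simp
    linarith [this, heq ▸ this]
  -- penalty strictly decreases
  have hpen : penalty n lmin p φ l' < penalty n lmin p φ l := by
    unfold penalty
    rw [← Finset.add_sum_erase _ _ hiS, ← Finset.add_sum_erase _ (fun j => p j * φ ((l j:ℝ) - lmin)) hiS]
    have htail : ∑ j ∈ S.erase i, p j * φ ((l' j:ℝ) - lmin) = ∑ j ∈ S.erase i, p j * φ ((l j:ℝ) - lmin) :=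
      Finset.sum_congr rfl fun j hj => by rw [hl'j j (Finset.ne_of_mem_erase hj)]
    rw [htail]
    have hx : ((l' i : ℝ)) - lmin < ((l i : ℝ)) - lmin := by
      rw [hl'i]
      have : ((L - 1 : ℕ) : ℝ) = (L:ℝ) - 1 := by
        push_cast [Nat.cast_sub hL1]; ring
      rw [this, ← hL]
      linarith
    have hmem1 : ((l' i : ℝ)) - lmin ∈ Set.Ici (0:ℝ) := by
      rw [hl'i]
      have : (lmin:ℝ) ≤ ((L - 1 : ℕ) : ℝ) := by exact_mod_cast (by omega : lmin ≤ L - 1)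
      exact Set.mem_Ici.mpr (by linarith)
    have hmem2 : ((l i : ℝ)) - lmin ∈ Set.Ici (0:ℝ) := by
      have : (lmin:ℝ) ≤ (l i : ℝ) := by exact_mod_cast hbounds.1
      exact Set.mem_Ici.mpr (by linarith)
    have hφlt : φ (((l' i : ℝ)) - lmin) < φ (((l i : ℝ)) - lmin) := hmono hmem1 hmem2 hx
    have hpi : 0 < p i := hppos i hiS
    have : p i * φ (((l' i : ℝ)) - lmin) < p i * φ (((l i : ℝ)) - lmin) :=
      mul_lt_mul_of_pos_left hφlt hpi
    linarith
  have := hopt l' hbnd' hfeas'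
  linarith
end

section
/- Suppose the probabilities are pairwise distinct, i.e., p_1 > p_2 > … > p_n > 0. Then every length vector l that minimizes the penalty Σ_{i=1}^n p_i·φ(l_i − l_min) among all feasible length vectors is monotonic: l_i ≥ l_j whenever i > j. -/
/-- If the probabilities are pairwise distinct (p_1 > p_2 > … > p_n > 0),
then every length vector minimizing the penalty among all feasible length vectors is
monotonic: l_i ≥ l_j whenever i > j. -/
theorem statement5 (D lmin lmax n : ℕ) (hD : 2 ≤ D) (hlm : lmin < lmax)
    (hn1 : D ^ lmin < n) (hn2 : n ≤ D ^ lmax) (hmod : (D - 1) ∣ (n - 1))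
    (p : ℕ → ℝ) (hppos : ∀ i ∈ Finset.Icc 1 n, 0 < p i)
    (hpdec : ∀ i ∈ Finset.Icc 1 n, ∀ j ∈ Finset.Icc 1 n, i < j → p j < p i)
    (φ : ℝ → ℝ) (hconv : ConvexOn ℝ (Set.Ici 0) φ)
    (hmono : StrictMonoOn φ (Set.Ici 0))
    (hφnn : ∀ x ∈ Set.Ici (0 : ℝ), 0 ≤ φ x)
    (l : ℕ → ℕ) (hl : ∀ i ∈ Finset.Icc 1 n, lmin ≤ l i ∧ l i ≤ lmax)
    (hfeas : kraft D n l ≤ 1)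
    (hopt : ∀ l' : ℕ → ℕ, (∀ i ∈ Finset.Icc 1 n, lmin ≤ l' i ∧ l' i ≤ lmax) →
      kraft D n l' ≤ 1 →
      penalty n lmin p φ l ≤ penalty n lmin p φ l') :
    ∀ i ∈ Finset.Icc 1 n, ∀ j ∈ Finset.Icc 1 n, j < i → l j ≤ l i := by
  intro i hi j hj hji
  by_contra hcon
  push_neg at hcon
  have hij : i ≠ j := (ne_of_lt hji).symm
  set s := Finset.Icc 1 n with hs
  set l' : ℕ → ℕ := fun k => if k = i then l j else if k = j then l i else l k with hldef
  have hl'i : l' i = l j := by simp [hldef]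
  have hl'j : l' j = l i := by simp [hldef, hij.symm]
  have hl'k : ∀ k, k ≠ i → k ≠ j → l' k = l k := by
    intro k h1 h2; simp [hldef, h1, h2]
  have hsub : ({i, j} : Finset ℕ) ⊆ s := by
    intro k hk
    simp only [Finset.mem_insert, Finset.mem_singleton] at hk
    rcases hk with rfl | rfl <;> assumption
  have hsplit : ∀ f : ℕ → ℝ, ∑ k ∈ s, f k = ∑ k ∈ s \ {i, j}, f k + (f i + f j) := by
    intro f
    rw [← Finset.sum_sdiff hsub, Finset.sum_pair hij]
  have hbounds : ∀ k ∈ s, lmin ≤ l' k ∧ l' k ≤ lmax := by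
    intro k hk
    by_cases h1 : k = i
    · subst h1; rw [hl'i]; exact hl j hj
    by_cases h2 : k = j
    · subst h2; rw [hl'j]; exact hl i hi
    rw [hl'k k h1 h2]; exact hl k hk
  have hrest : ∀ f : ℕ → ℕ → ℝ,
      ∑ k ∈ s \ {i, j}, f k (l' k) = ∑ k ∈ s \ {i, j}, f k (l k) := by
    intro f
    apply Finset.sum_congr rfl
    intro k hk
    simp only [Finset.mem_sdiff, Finset.mem_insert, Finset.mem_singleton, not_or] at hk
    rw [hl'k k hk.2.1 hk.2.2]
  have hkraft : kraft D n l' = kraft D n l := by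
    unfold kraft
    rw [← hs, hsplit, hsplit, hrest (fun _ m => (D : ℝ) ^ (-(m : ℤ))), hl'i, hl'j]
    ring
  have hpen : penalty n lmin p φ l' < penalty n lmin p φ l := by
    unfold penalty
    rw [← hs, hsplit, hsplit, hrest (fun k m => p k * φ ((m : ℝ) - lmin)), hl'i, hl'j]
    have hp : p i < p j := hpdec j hj i hi hji
    have hmem1 : ((l i : ℝ) - lmin) ∈ Set.Ici (0 : ℝ) := by
      have := (hl i hi).1
      simp only [Set.mem_Ici, sub_nonneg]
      exact_mod_cast this
    have hmem2 : ((l j : ℝ) - lmin) ∈ Set.Ici (0 : ℝ) := by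
      have := (hl j hj).1
      simp only [Set.mem_Ici, sub_nonneg]
      exact_mod_cast this
    have hφlt : φ ((l i : ℝ) - lmin) < φ ((l j : ℝ) - lmin) := by
      apply hmono hmem1 hmem2
      have : (l i : ℝ) < l j := by exact_mod_cast hcon
      linarith
    nlinarith [mul_pos (sub_pos.mpr hp) (sub_pos.mpr hφlt)]
  have := hopt l' hbounds (by rw [hkraft]; exact hfeas)
  linarith
end

section
/- Let D ≥ 2 and n ≥ 1 be integers and let l_1, …, l_n be positive integers satisfying the Kraft equality Σ_{i=1}^n D^{−l_i} = 1. Then max_i l_i ≤ (n−1)/(D−1). (Hence imposing the maximum codeword length ⌈(n−1)/(D−1)⌉ is a trivial, non-binding constraint.) -/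
/-!
For each depth `d < l i`, the number `D ^ d * ∑_{l j > d} D ^ (-l j)` (the number of internal
nodes at depth `d` of the code tree) is positive, and by the Kraft equality it is `D ^ d` minus
an integer, so it is at least `1`. Summing over `d < l i` and exchanging the sums gives
`(D - 1) * l i ≤ ∑ j, (1 - D ^ (-l j)) = n - 1`.
-/

open Finset

theorem sub_one_mul_sum_pow_mul_inv_pow {K : Type*} [Field K] {x : K} (hx : x ≠ 0) (k : ℕ) :
    (x - 1) * ∑ d ∈ range k, x ^ d * (x ^ k)⁻¹ = 1 - (x ^ k)⁻¹ := by
  rw [← sum_mul, ← mul_assoc, mul_comm (x - 1), geom_sum_mul, sub_mul,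
    mul_inv_cancel₀ (pow_ne_zero k hx), one_mul]

section Kraft

variable {ι : Type*} [Fintype ι] {D : ℕ} {l : ι → ℕ}

theorem one_le_sum_pow_mul_inv_pow_of_lt (hD : 0 < D) (hkraft : ∑ j, ((D : ℝ) ^ l j)⁻¹ = 1)
    {d : ℕ} {i : ι} (hi : d < l i) :
    1 ≤ ∑ j with d < l j, (D : ℝ) ^ d * ((D : ℝ) ^ l j)⁻¹ := by
  set S := ∑ j with d < l j, (D : ℝ) ^ d * ((D : ℝ) ^ l j)⁻¹
  have hD₀ : (D : ℝ) ≠ 0 := by positivity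
  obtain ⟨m, hm⟩ : ∃ m : ℕ, S + m = (D : ℝ) ^ d := by
    refine ⟨∑ j with ¬d < l j, D ^ (d - l j), ?_⟩
    have hshort : ∀ j ∈ univ.filter (¬d < l ·),
        ((D ^ (d - l j) : ℕ) : ℝ) = (D : ℝ) ^ d * ((D : ℝ) ^ l j)⁻¹ := fun j hj => by
      rw [Nat.cast_pow, pow_sub₀ _ hD₀ (not_lt.mp (mem_filter.mp hj).2)]
    rw [Nat.cast_sum, sum_congr rfl hshort, sum_filter_add_sum_filter_not, ← mul_sum, hkraft,
      mul_one]
  have hS : 0 < S :=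
    sum_pos' (fun j _ => by positivity) ⟨i, mem_filter.mpr ⟨mem_univ i, hi⟩, by positivity⟩
  have hlt : m < D ^ d := by exact_mod_cast (show (m : ℝ) < (D : ℝ) ^ d by linarith)
  have hle : (m : ℝ) + 1 ≤ (D : ℝ) ^ d := by exact_mod_cast hlt
  linarith

theorem sub_one_mul_le_card_sub_one (hD : 0 < D) (hkraft : ∑ j, ((D : ℝ) ^ l j)⁻¹ = 1)
    (i : ι) :
    ((D : ℝ) - 1) * l i ≤ Fintype.card ι - 1 := by
  have hD₁ : (0 : ℝ) ≤ D - 1 := by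
    have : (1 : ℝ) ≤ D := by exact_mod_cast hD
    linarith
  calc ((D : ℝ) - 1) * l i = (D - 1) * ∑ _d ∈ range (l i), (1 : ℝ) := by simp
    _ ≤ (D - 1) * ∑ d ∈ range (l i), ∑ j with d < l j, (D : ℝ) ^ d * ((D : ℝ) ^ l j)⁻¹ :=
      mul_le_mul_of_nonneg_left (sum_le_sum fun d hd =>
        one_le_sum_pow_mul_inv_pow_of_lt hD hkraft (mem_range.mp hd)) hD₁
    _ = (D - 1) * ∑ j, ∑ d ∈ range (l i) with d < l j, (D : ℝ) ^ d * ((D : ℝ) ^ l j)⁻¹ := by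
      congr 1
      exact sum_comm' fun d j => by simp
    _ ≤ (D - 1) * ∑ j, ∑ d ∈ range (l j), (D : ℝ) ^ d * ((D : ℝ) ^ l j)⁻¹ := by
      gcongr with j
      exact fun d hd => mem_range.mpr (mem_filter.mp hd).2
    _ = ∑ j, (1 - ((D : ℝ) ^ l j)⁻¹) := by
      rw [mul_sum]
      exact sum_congr rfl fun j _ => sub_one_mul_sum_pow_mul_inv_pow (by positivity) (l j)
    _ = Fintype.card ι - 1 := by rw [sum_sub_distrib, hkraft, sum_const, card_univ, nsmul_one]

end Kraft

theorem statement8_general (D n : ℕ) (hD : 2 ≤ D)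
    (l : Fin n → ℕ)
    (hkraft : ∑ i, (D : ℝ) ^ (-(l i : ℤ)) = 1) :
    ∀ i, (l i : ℝ) ≤ ((n : ℝ) - 1) / ((D : ℝ) - 1) := by
  intro i
  have hD₁ : (0 : ℝ) < D - 1 := by
    have : (2 : ℝ) ≤ D := by exact_mod_cast hD
    linarith
  simp only [zpow_neg, zpow_natCast] at hkraft
  rw [le_div_iff₀ hD₁, mul_comm, ← Fintype.card_fin n]
  exact sub_one_mul_le_card_sub_one (by omega) hkraft i

/-- If D ≥ 2, n ≥ 1 and positive integers l_1,…,l_n satisfy the Kraft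
equality Σ D^{−l_i} = 1, then max_i l_i ≤ (n−1)/(D−1). -/
theorem statement8 (D n : ℕ) (hD : 2 ≤ D) (hn : 1 ≤ n)
    (l : Fin n → ℕ) (hpos : ∀ i, 1 ≤ l i)
    (hkraft : ∑ i, (D : ℝ) ^ (-(l i : ℤ)) = 1) :
    ∀ i, (l i : ℝ) ≤ ((n : ℝ) - 1) / ((D : ℝ) - 1) :=
  statement8_general D n hD l hkraft
end

section
/- In an instance of the D-ary Coin Collector's problem, suppose the minimum item width ρ* is strictly less than the remainder ρ_r of the D-adic decomposition ρ_t = ω·ρ_r. Then every feasible subset B contains a number of items of width ρ* that is a multiple of D; in particular, if fewer than D items have width ρ*, then no feasible subset contains any item of width ρ*. -/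
/-- In an instance of the D-ary Coin Collector's problem (items indexed
by Fin m, item i of width D^{e i} and weight μ i, total width ρ_t = ω·D^{e_r} with
ω a positive integer not divisible by D), if the minimum item width ρ* is strictly
less than the remainder ρ_r = D^{e_r}, then every feasible subset contains a number
of items of width ρ* that is a multiple of D; in particular, if fewer than D items
have width ρ*, then no feasible subset contains any item of width ρ*. -/
theorem statement11 (D m : ℕ) (hD : 2 ≤ D) (hm : 1 ≤ m)
    (e : Fin m → ℤ) (μ : Fin m → ℝ)
    (er : ℤ) (ω : ℕ) (hω : 0 < ω) (hωD : ¬ (D ∣ ω))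
    (ρstar : ℝ) (hach : ∃ i, (D : ℝ) ^ (e i) = ρstar)
    (hmin : ∀ i, ρstar ≤ (D : ℝ) ^ (e i))
    (hlt : ρstar < (D : ℝ) ^ er) :
    (∀ B : Finset (Fin m), (∑ i ∈ B, (D : ℝ) ^ (e i) = (ω : ℝ) * (D : ℝ) ^ er) →
      D ∣ (B.filter (fun i => (D : ℝ) ^ (e i) = ρstar)).card) ∧
    ((Finset.univ.filter (fun i => (D : ℝ) ^ (e i) = ρstar)).card < D →
      ∀ B : Finset (Fin m), (∑ i ∈ B, (D : ℝ) ^ (e i) = (ω : ℝ) * (D : ℝ) ^ er) →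
        B.filter (fun i => (D : ℝ) ^ (e i) = ρstar) = ∅) := by
  classical
  obtain ⟨i0, hi0⟩ := hach
  have hD1 : (1:ℝ) < (D:ℝ) := by
    have : (2:ℝ) ≤ (D:ℝ) := by exact_mod_cast hD
    linarith
  have hD0 : (D:ℝ) ≠ 0 := by linarith
  have hle : ∀ i, e i0 ≤ e i := by
    intro i
    have h := hmin i
    rw [← hi0] at h
    exact (zpow_le_zpow_iff_right₀ hD1).mp h
  have her : e i0 < er := by
    have h := hlt
    rw [← hi0] at h
    exact (zpow_lt_zpow_iff_right₀ hD1).mp h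
  set P : Fin m → Prop := fun i => (D : ℝ) ^ (e i) = ρstar with hPdef
  have hP : ∀ i, P i ↔ (e i - e i0).toNat = 0 := by
    intro i
    constructor
    · intro h
      have h' : (D:ℝ) ^ (e i) ≤ (D:ℝ) ^ (e i0) := by rw [h, hi0]
      have := (zpow_le_zpow_iff_right₀ hD1).mp h'
      omega
    · intro h
      have h1 := hle i
      have : e i = e i0 := by omega
      rw [hPdef]
      simp only [this, hi0]
  set k := (er - e i0).toNat with hk
  have hk1 : 1 ≤ k := by omega
  have key : ∀ B : Finset (Fin m), (∑ i ∈ B, (D : ℝ) ^ (e i) = (ω : ℝ) * (D : ℝ) ^ er) →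
      D ∣ (B.filter P).card := by
    intro B hB
    have hnat : (∑ i ∈ B, D ^ ((e i - e i0).toNat)) = ω * D ^ k := by
      have hreal : ((∑ i ∈ B, D ^ ((e i - e i0).toNat) : ℕ) : ℝ) = ((ω * D ^ k : ℕ) : ℝ) := by
        push_cast
        calc ∑ i ∈ B, (D:ℝ) ^ ((e i - e i0).toNat)
            = ∑ i ∈ B, (D:ℝ) ^ (e i) / (D:ℝ) ^ (e i0) := by
              refine Finset.sum_congr rfl fun i _ => ?_
              rw [← zpow_natCast, Int.toNat_of_nonneg (by linarith [hle i]),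
                zpow_sub₀ hD0]
          _ = ((ω:ℝ) * (D:ℝ) ^ er) / (D:ℝ) ^ (e i0) := by rw [← Finset.sum_div, hB]
          _ = (ω:ℝ) * (D:ℝ) ^ k := by
              rw [← zpow_natCast (D:ℝ) k, hk, Int.toNat_of_nonneg (by omega),
                zpow_sub₀ hD0]
              ring
      exact_mod_cast hreal
    haveI : NeZero D := ⟨by omega⟩
    have hcard : ((B.filter P).card : ZMod D) = 0 := by
      have h2 : ((∑ i ∈ B, D ^ ((e i - e i0).toNat) : ℕ) : ZMod D) = 0 := by
        rw [hnat]
        push_cast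
        rw [ZMod.natCast_self, zero_pow (by omega), mul_zero]
      rw [← h2, Finset.card_filter]
      push_cast
      refine Finset.sum_congr rfl fun i _ => ?_
      by_cases h : P i
      · rw [if_pos h, (hP i).mp h, pow_zero]
      · have hne : (e i - e i0).toNat ≠ 0 := fun hc => h ((hP i).mpr hc)
        rw [if_neg h, ZMod.natCast_self, zero_pow hne]
    exact (ZMod.natCast_eq_zero_iff _ _).mp hcard
  refine ⟨key, fun hsmall B hB => ?_⟩
  have hdvd := key B hB
  have hsub : B.filter P ⊆ Finset.univ.filter P :=
    Finset.filter_subset_filter _ (Finset.subset_univ B)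
  have hlt' : (B.filter P).card < D :=
    lt_of_le_of_lt (Finset.card_le_card hsub) hsmall
  exact Finset.card_eq_zero.mp (Nat.eq_zero_of_dvd_of_lt hdvd hlt')
end

section
/- In an instance of the D-ary Coin Collector's problem, suppose the minimum item width ρ* equals the remainder ρ_r of the D-adic decomposition ρ_t = ω·ρ_r, and suppose a feasible subset exists. Then every feasible subset contains at least one item of width ρ*, and there exists an optimal solution B containing an item i* of width ρ* whose weight μ_{i*} is minimal among all items of width ρ*. -/
/-- In an instance of the D-ary Coin Collector's problem, if the minimum
item width ρ* equals the remainder ρ_r = D^{e_r} of the D-adic decomposition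
ρ_t = ω·ρ_r and a feasible subset exists, then every feasible subset contains at least
one item of width ρ*, and there exists an optimal solution containing an item of width
ρ* whose weight is minimal among all items of width ρ*. -/
theorem statement12 (D m : ℕ) (hD : 2 ≤ D) (hm : 1 ≤ m)
    (e : Fin m → ℤ) (μ : Fin m → ℝ)
    (er : ℤ) (ω : ℕ) (hω : 0 < ω) (hωD : ¬ (D ∣ ω))
    (ρstar : ℝ) (hach : ∃ i, (D : ℝ) ^ (e i) = ρstar)
    (hmin : ∀ i, ρstar ≤ (D : ℝ) ^ (e i))
    (heq : ρstar = (D : ℝ) ^ er)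
    (hfeas : ∃ B : Finset (Fin m), ∑ i ∈ B, (D : ℝ) ^ (e i) = (ω : ℝ) * (D : ℝ) ^ er) :
    (∀ B : Finset (Fin m), (∑ i ∈ B, (D : ℝ) ^ (e i) = (ω : ℝ) * (D : ℝ) ^ er) →
      ∃ i ∈ B, (D : ℝ) ^ (e i) = ρstar) ∧
    (∃ B : Finset (Fin m),
      ((∑ i ∈ B, (D : ℝ) ^ (e i) = (ω : ℝ) * (D : ℝ) ^ er) ∧
        ∀ B' : Finset (Fin m),
          (∑ i ∈ B', (D : ℝ) ^ (e i) = (ω : ℝ) * (D : ℝ) ^ er) →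
          ∑ i ∈ B, μ i ≤ ∑ i ∈ B', μ i) ∧
      ∃ i ∈ B, (D : ℝ) ^ (e i) = ρstar ∧
        ∀ j, (D : ℝ) ^ (e j) = ρstar → μ i ≤ μ j) := by
  classical
  have hD1 : (1:ℝ) < (D:ℝ) := by exact_mod_cast lt_of_lt_of_le one_lt_two (by exact_mod_cast hD)
  have hD0 : (0:ℝ) < (D:ℝ) := lt_trans one_pos hD1
  have hwidth : ∀ i, ((D:ℝ) ^ (e i) = ρstar ↔ e i = er) := by
    intro i
    rw [heq]
    constructor
    · intro h
      exact zpow_right_injective₀ hD0 (ne_of_gt hD1) h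
    · intro h; rw [h]
  have hge : ∀ i, er ≤ e i := by
    intro i
    have h := hmin i
    rw [heq] at h
    exact (zpow_le_zpow_iff_right₀ hD1).mp h
  have part1 : ∀ B : Finset (Fin m), (∑ i ∈ B, (D : ℝ) ^ (e i) = (ω : ℝ) * (D : ℝ) ^ er) →
      ∃ i ∈ B, (D : ℝ) ^ (e i) = ρstar := by
    intro B hB
    by_contra h
    push_neg at h
    have hgt : ∀ i ∈ B, 1 ≤ (e i - er).toNat := by
      intro i hi
      have h1 : er < e i := lt_of_le_of_ne (hge i)
        (fun hc => h i hi ((hwidth i).mpr hc.symm))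
      omega
    have hne : (D:ℝ)^er ≠ 0 := by positivity
    have hsum : ((∑ i ∈ B, D ^ ((e i - er).toNat) : ℕ) : ℝ) * (D:ℝ)^er
        = (ω:ℝ) * (D:ℝ)^er := by
      rw [← hB]
      push_cast
      rw [Finset.sum_mul]
      apply Finset.sum_congr rfl
      intro i hi
      rw [← zpow_natCast (D:ℝ), ← zpow_add₀ (ne_of_gt hD0)]
      congr 1
      have := hge i
      omega
    have hℕ : (∑ i ∈ B, D ^ ((e i - er).toNat)) = ω := by
      exact_mod_cast mul_right_cancel₀ hne hsum
    apply hωD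
    rw [← hℕ]
    apply Finset.dvd_sum
    intro i hi
    exact dvd_pow_self D (by have := hgt i hi; omega)
  refine ⟨part1, ?_⟩
  obtain ⟨i0, hi0⟩ := hach
  obtain ⟨istar, histar_mem, histar_min⟩ :=
    Finset.exists_min_image (Finset.univ.filter (fun j => (D:ℝ)^(e j) = ρstar)) μ
      ⟨i0, by simp [hi0]⟩
  obtain ⟨Bf, hBf⟩ := hfeas
  obtain ⟨B0, hB0mem, hB0min⟩ :=
    Finset.exists_min_image
      ((Finset.univ : Finset (Finset (Fin m))).filter
        (fun B => ∑ i ∈ B, (D:ℝ)^(e i) = (ω:ℝ)*(D:ℝ)^er))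
      (fun B => ∑ i ∈ B, μ i) ⟨Bf, by simp [hBf]⟩
  simp only [Finset.mem_filter, Finset.mem_univ, true_and] at hB0mem histar_mem
  have hB0min' : ∀ B', (∑ i ∈ B', (D:ℝ)^(e i) = (ω:ℝ)*(D:ℝ)^er) →
      ∑ i ∈ B0, μ i ≤ ∑ i ∈ B', μ i := by
    intro B' hB'
    exact hB0min B' (by simp [hB'])
  have histar_min' : ∀ j, (D:ℝ)^(e j) = ρstar → μ istar ≤ μ j := by
    intro j hj
    exact histar_min j (by simp [hj])
  obtain ⟨i, hiB0, hiw⟩ := part1 B0 hB0mem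
  by_cases hin : istar ∈ B0
  · exact ⟨B0, ⟨hB0mem, hB0min'⟩, istar, hin, histar_mem, histar_min'⟩
  · have hiserase : istar ∉ B0.erase i := fun hc => hin (Finset.mem_of_mem_erase hc)
    have herase : ∀ f : Fin m → ℝ,
        ∑ k ∈ insert istar (B0.erase i), f k = f istar + (∑ k ∈ B0, f k - f i) := by
      intro f
      rw [Finset.sum_insert hiserase, Finset.sum_erase_eq_sub hiB0]
    refine ⟨insert istar (B0.erase i), ⟨?_, ?_⟩, istar, Finset.mem_insert_self _ _,
      histar_mem, histar_min'⟩
    · rw [herase, histar_mem, hiw, hB0mem]; ring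
    · intro B' hB'
      rw [herase]
      have h1 : μ istar ≤ μ i := histar_min' i hiw
      have h2 := hB0min' B' hB'
      linarith
end

section
/- In an instance of the D-ary Coin Collector's problem, suppose the minimum item width ρ* is strictly less than the remainder ρ_r of the D-adic decomposition ρ_t = ω·ρ_r, suppose a feasible subset exists, and suppose at least D items have width ρ*. Let P* be a set of D items of width ρ* whose weights are minimal among items of width ρ* (i.e., μ_i ≤ μ_j for all i ∈ P* and all items j of width ρ* outside P*). Then there exists an optimal solution B such that either B contains no item of width ρ*, or P* ⊆ B. -/
/-- In an instance of the D-ary Coin Collector's problem, suppose the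
minimum item width ρ* is strictly less than the remainder ρ_r = D^{e_r} of the D-adic
decomposition ρ_t = ω·ρ_r, a feasible subset exists, and at least D items have width
ρ*. If P* is a set of D items of width ρ* whose weights are minimal among items of
width ρ*, then there exists an optimal solution B such that either B contains no item
of width ρ*, or P* ⊆ B. -/
theorem statement13 (D m : ℕ) (hD : 2 ≤ D) (hm : 1 ≤ m)
    (e : Fin m → ℤ) (μ : Fin m → ℝ)
    (er : ℤ) (ω : ℕ) (hω : 0 < ω) (hωD : ¬ (D ∣ ω))
    (ρstar : ℝ) (hach : ∃ i, (D : ℝ) ^ (e i) = ρstar)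
    (hmin : ∀ i, ρstar ≤ (D : ℝ) ^ (e i))
    (hlt : ρstar < (D : ℝ) ^ er)
    (hfeas : ∃ B : Finset (Fin m), ∑ i ∈ B, (D : ℝ) ^ (e i) = (ω : ℝ) * (D : ℝ) ^ er)
    (hcard : D ≤ (Finset.univ.filter (fun i => (D : ℝ) ^ (e i) = ρstar)).card)
    (P : Finset (Fin m)) (hPcard : P.card = D)
    (hPw : ∀ i ∈ P, (D : ℝ) ^ (e i) = ρstar)
    (hPmin : ∀ i ∈ P, ∀ j ∉ P, (D : ℝ) ^ (e j) = ρstar → μ i ≤ μ j) :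
    ∃ B : Finset (Fin m),
      ((∑ i ∈ B, (D : ℝ) ^ (e i) = (ω : ℝ) * (D : ℝ) ^ er) ∧
        ∀ B' : Finset (Fin m),
          (∑ i ∈ B', (D : ℝ) ^ (e i) = (ω : ℝ) * (D : ℝ) ^ er) →
          ∑ i ∈ B, μ i ≤ ∑ i ∈ B', μ i) ∧
      (B.filter (fun i => (D : ℝ) ^ (e i) = ρstar) = ∅ ∨ P ⊆ B) := by
  classical
  have hD1 : (1 : ℝ) < (D : ℝ) := by exact_mod_cast (by omega : 1 < D)
  have hD0 : (D : ℝ) ≠ 0 := by positivity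
  obtain ⟨i0, hi0⟩ := hach
  set estar := e i0 with hestar
  have hle : ∀ i, estar ≤ e i := by
    intro i
    have h := hmin i
    rw [← hi0] at h
    exact (zpow_le_zpow_iff_right₀ hD1).mp h
  have her : estar < er := by
    have h := hlt
    rw [← hi0] at h
    exact (zpow_lt_zpow_iff_right₀ hD1).mp h
  have hwidth_iff : ∀ i, ((D : ℝ) ^ (e i) = ρstar ↔ e i = estar) := by
    intro i
    rw [← hi0]
    constructor
    · intro h
      exact zpow_right_injective₀ (by positivity) (ne_of_gt hD1) h
    · intro h; rw [h]
  -- express widths via natural powers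
  have hexp : ∀ a : ℤ, estar ≤ a → (D : ℝ) ^ a = (D : ℝ) ^ estar * ((D ^ (a - estar).toNat : ℕ) : ℝ) := by
    intro a ha
    push_cast
    rw [← zpow_natCast (D : ℝ), Int.toNat_of_nonneg (sub_nonneg.2 ha), ← zpow_add₀ hD0]
    ring_nf
  have keyNat : ∀ B : Finset (Fin m),
      (∑ i ∈ B, (D : ℝ) ^ (e i) = (ω : ℝ) * (D : ℝ) ^ er) →
      ∑ i ∈ B, D ^ (e i - estar).toNat = ω * D ^ (er - estar).toNat := by
    intro B hB
    have h1 : (D : ℝ) ^ estar * ((∑ i ∈ B, D ^ (e i - estar).toNat : ℕ) : ℝ)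
        = (D : ℝ) ^ estar * ((ω * D ^ (er - estar).toNat : ℕ) : ℝ) := by
      push_cast
      rw [Finset.mul_sum]
      calc ∑ i ∈ B, (D:ℝ) ^ estar * (D:ℝ) ^ ((e i - estar).toNat)
          = ∑ i ∈ B, (D : ℝ) ^ (e i) := by
            refine Finset.sum_congr rfl fun i _ => ?_
            rw [hexp (e i) (hle i)]; push_cast; ring
        _ = (ω : ℝ) * (D : ℝ) ^ er := hB
        _ = (ω : ℝ) * ((D : ℝ) ^ estar * (D : ℝ) ^ ((er - estar).toNat)) := by
            rw [hexp er (le_of_lt her)]; push_cast; ring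
        _ = (D:ℝ) ^ estar * ((ω:ℝ) * (D:ℝ) ^ ((er - estar).toNat)) := by ring
    have h2 := mul_left_cancel₀ (zpow_ne_zero estar hD0) h1
    exact_mod_cast h2
  -- divisibility of the count of minimum-width items
  have hdvd : ∀ B : Finset (Fin m),
      (∑ i ∈ B, (D : ℝ) ^ (e i) = (ω : ℝ) * (D : ℝ) ^ er) →
      D ∣ (B.filter (fun i => (D : ℝ) ^ (e i) = ρstar)).card := by
    intro B hB
    have hN := keyNat B hB
    rw [← Finset.sum_filter_add_sum_filter_not B (fun i => (D : ℝ) ^ (e i) = ρstar)] at hN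
    have h1 : ∑ i ∈ B.filter (fun i => (D : ℝ) ^ (e i) = ρstar), D ^ (e i - estar).toNat
        = (B.filter (fun i => (D : ℝ) ^ (e i) = ρstar)).card := by
      rw [Finset.sum_congr rfl (fun i hi => ?_), Finset.sum_const, smul_eq_mul, mul_one]
      have hw := (Finset.mem_filter.mp hi).2
      rw [(hwidth_iff i).mp hw]
      simp
    rw [h1] at hN
    have h2 : D ∣ ∑ i ∈ B.filter (fun i => ¬ (D : ℝ) ^ (e i) = ρstar), D ^ (e i - estar).toNat := by
      refine Finset.dvd_sum fun i hi => dvd_pow_self D ?_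
      have hw := (Finset.mem_filter.mp hi).2
      have : e i ≠ estar := fun h => hw ((hwidth_iff i).mpr h)
      have := hle i
      omega
    have h3 : D ∣ ω * D ^ (er - estar).toNat := by
      refine dvd_mul_of_dvd_right (dvd_pow_self D ?_) ω
      omega
    rw [add_comm] at hN
    exact (Nat.dvd_add_right h2).mp (hN ▸ h3)
  -- existence of an optimal solution
  obtain ⟨B0, hB0⟩ := hfeas
  obtain ⟨B, hBF, hBmin⟩ := Finset.exists_min_image
    ((Finset.univ : Finset (Finset (Fin m))).filter
      (fun B => ∑ i ∈ B, (D : ℝ) ^ (e i) = (ω : ℝ) * (D : ℝ) ^ er))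
    (fun B => ∑ i ∈ B, μ i) ⟨B0, by simp [hB0]⟩
  have hBfeas : ∑ i ∈ B, (D : ℝ) ^ (e i) = (ω : ℝ) * (D : ℝ) ^ er :=
    (Finset.mem_filter.mp hBF).2
  have hBopt : ∀ B' : Finset (Fin m),
      (∑ i ∈ B', (D : ℝ) ^ (e i) = (ω : ℝ) * (D : ℝ) ^ er) →
      ∑ i ∈ B, μ i ≤ ∑ i ∈ B', μ i := fun B' h => hBmin B' (by simp [h])
  set S := B.filter (fun i => (D : ℝ) ^ (e i) = ρstar) with hSdef
  by_cases hSe : S = ∅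
  · exact ⟨B, ⟨hBfeas, hBopt⟩, Or.inl hSe⟩
  · have hScard : D ≤ S.card :=
      Nat.le_of_dvd (Finset.card_pos.mpr (Finset.nonempty_of_ne_empty hSe)) (hdvd B hBfeas)
    have hSP_card : (S \ P).card + (S ∩ P).card = S.card := by
      have := Finset.sum_inter_add_sum_sdiff S P (fun _ => (1:ℕ))
      simpa [add_comm] using this
    have hSPD : (S ∩ P).card ≤ D := hPcard ▸ Finset.card_le_card Finset.inter_subset_right
    obtain ⟨U, hU, hUcard⟩ := Finset.exists_subset_card_eq (s := S \ P) (n := S.card - D)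
      (by omega)
    set B' := (B \ S) ∪ (P ∪ U) with hB'def
    have hSsub : S ⊆ B := Finset.filter_subset _ _
    have hSw : ∀ i ∈ S, (D : ℝ) ^ (e i) = ρstar := fun i hi => (Finset.mem_filter.mp hi).2
    have hPS : ∀ i ∈ P, i ∈ B → i ∈ S := fun i hiP hiB =>
      Finset.mem_filter.mpr ⟨hiB, hPw i hiP⟩
    have hd2 : Disjoint P U := Finset.disjoint_of_subset_right hU Finset.disjoint_sdiff
    have hd1 : Disjoint (B \ S) (P ∪ U) := by
      rw [Finset.disjoint_union_right]
      constructor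
      · rw [Finset.disjoint_left]
        intro a ha haP
        exact (Finset.mem_sdiff.mp ha).2 (hPS a haP (Finset.mem_sdiff.mp ha).1)
      · exact Finset.disjoint_of_subset_right (hU.trans Finset.sdiff_subset) Finset.sdiff_disjoint
    have hB'sum : ∀ f : Fin m → ℝ,
        ∑ i ∈ B', f i = ∑ i ∈ B \ S, f i + (∑ i ∈ P, f i + ∑ i ∈ U, f i) := by
      intro f
      rw [hB'def, Finset.sum_union hd1, Finset.sum_union hd2]
    have hBsplit : ∀ f : Fin m → ℝ,
        ∑ i ∈ B \ S, f i + ∑ i ∈ S, f i = ∑ i ∈ B, f i := fun f => Finset.sum_sdiff hSsub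
    -- width computations
    have hconst : ∀ (T : Finset (Fin m)), (∀ i ∈ T, (D : ℝ) ^ (e i) = ρstar) →
        ∑ i ∈ T, (D : ℝ) ^ (e i) = (T.card : ℝ) * ρstar := by
      intro T hT
      rw [Finset.sum_congr rfl hT, Finset.sum_const, nsmul_eq_mul]
    have hUw : ∀ i ∈ U, (D : ℝ) ^ (e i) = ρstar := fun i hi =>
      hSw i (Finset.mem_sdiff.mp (hU hi)).1
    have hsumS := hconst S hSw
    have hsumP := hconst P hPw
    have hsumU := hconst U hUw
    have hcastU : ((S.card - D : ℕ) : ℝ) = (S.card : ℝ) - (D : ℝ) := by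
      push_cast [Nat.cast_sub hScard]; ring
    have hB'feas : ∑ i ∈ B', (D : ℝ) ^ (e i) = (ω : ℝ) * (D : ℝ) ^ er := by
      rw [hB'sum, hsumP, hsumU, hPcard, hUcard, hcastU]
      have h := hBsplit (fun i => (D : ℝ) ^ (e i))
      rw [hsumS] at h
      rw [← hBfeas, ← h]
      ring
    -- weight comparison
    set R := (S \ P) \ U with hRdef
    have hRU : ∑ i ∈ R, μ i + ∑ i ∈ U, μ i = ∑ i ∈ S \ P, μ i := Finset.sum_sdiff hU
    have hRUc : R.card + U.card = (S \ P).card := by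
      have := Finset.sum_sdiff (f := fun _ => (1:ℕ)) hU
      simpa using this
    have hPSc : (P \ S).card + (P ∩ S).card = P.card := by
      have := Finset.sum_inter_add_sum_sdiff P S (fun _ => (1:ℕ))
      simpa [add_comm] using this
    have hRcard : R.card = (P \ S).card := by
      have h4 : (S ∩ P).card = (P ∩ S).card := by rw [Finset.inter_comm]
      omega
    have hkey : ∑ i ∈ P \ S, μ i ≤ ∑ i ∈ R, μ i := by
      have eqv := Finset.equivOfCardEq hRcard.symm
      calc ∑ i ∈ P \ S, μ i = ∑ x : (P \ S : Finset (Fin m)), μ x :=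
            (Finset.sum_coe_sort _ _).symm
        _ ≤ ∑ x : (P \ S : Finset (Fin m)), μ (eqv x) := by
            refine Finset.sum_le_sum fun x _ => ?_
            have hx := Finset.mem_sdiff.mp x.2
            have hy := Finset.mem_sdiff.mp (Finset.mem_sdiff.mp (eqv x).2).1
            exact hPmin x hx.1 (eqv x) hy.2 (hSw _ hy.1)
        _ = ∑ y : (R : Finset (Fin m)), μ y := Equiv.sum_comp eqv (fun y => μ (y : Fin m))
        _ = ∑ i ∈ R, μ i := Finset.sum_coe_sort _ _
    have hμle : ∑ i ∈ B', μ i ≤ ∑ i ∈ B, μ i := by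
      have d1 := hBsplit μ
      have d2 : ∑ i ∈ S ∩ P, μ i + ∑ i ∈ S \ P, μ i = ∑ i ∈ S, μ i :=
        Finset.sum_inter_add_sum_sdiff S P μ
      have d3 : ∑ i ∈ P ∩ S, μ i + ∑ i ∈ P \ S, μ i = ∑ i ∈ P, μ i :=
        Finset.sum_inter_add_sum_sdiff P S μ
      have d4 : ∑ i ∈ S ∩ P, μ i = ∑ i ∈ P ∩ S, μ i := by rw [Finset.inter_comm]
      rw [hB'sum]
      linarith
    have hPB' : P ⊆ B' := fun i hi =>
      Finset.mem_union.mpr (Or.inr (Finset.mem_union.mpr (Or.inl hi)))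
    exact ⟨B', ⟨hB'feas, fun B'' h => le_trans hμle (hBopt B'' h)⟩, Or.inr hPB'⟩
end

section
/- Let D ≥ 2 and n ≥ 1 be integers and let p_1 ≥ p_2 ≥ … ≥ p_n ≥ 0 be reals. For 0 ≤ m ≤ n define the cumulative sum s_m = Σ_{k=n−m+1}^{n} p_k (so s_0 = 0). Then for all integers α′, α″ with 0 < α′ + 1 < α″ and D·(α″+1) − α′ ≤ n, the concave Monge (quadrangle) inequality holds: s_{Dα″ − α′} + s_{D(α″+1) − (α′+1)} ≤ s_{D(α″+1) − α′} + s_{Dα″ − (α′+1)}. -/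
/-- The cumulative sum `s_m = Σ_{k=n−m+1}^n p_k`. -/
noncomputable def cumSum (n : ℕ) (p : ℕ → ℝ) (m : ℕ) : ℝ :=
  ∑ k ∈ Finset.Icc (n - m + 1) n, p k

lemma cumSum_step (n : ℕ) (p : ℕ → ℝ) (m : ℕ) (h1 : 1 ≤ m) (h2 : m ≤ n) :
    cumSum n p m = p (n - m + 1) + cumSum n p (m - 1) := by
  unfold cumSum
  have h3 : n - (m - 1) + 1 = (n - m + 1) + 1 := by omega
  rw [h3]
  have h4 : Finset.Icc (n - m + 1) n =
      insert (n - m + 1) (Finset.Icc ((n - m + 1) + 1) n) := by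
    ext x
    simp only [Finset.mem_Icc, Finset.mem_insert]
    omega
  rw [h4, Finset.sum_insert (by simp)]

/-- For D ≥ 2, n ≥ 1 and nonincreasing nonnegative reals
p_1 ≥ … ≥ p_n ≥ 0, the cumulative sums s_m = Σ_{k=n−m+1}^n p_k satisfy the concave
Monge (quadrangle) inequality: for all α′, α″ with 0 < α′+1 < α″ and
D·(α″+1) − α′ ≤ n,
s_{Dα″ − α′} + s_{D(α″+1) − (α′+1)} ≤ s_{D(α″+1) − α′} + s_{Dα″ − (α′+1)}. -/
theorem statement14 (D n : ℕ) (hD : 2 ≤ D) (hn : 1 ≤ n)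
    (p : ℕ → ℝ) (hpnn : ∀ k ∈ Finset.Icc 1 n, 0 ≤ p k)
    (hpdec : ∀ i ∈ Finset.Icc 1 n, ∀ j ∈ Finset.Icc 1 n, i ≤ j → p j ≤ p i)
    (α' α'' : ℕ) (hα : α' + 1 < α'') (hbound : D * (α'' + 1) - α' ≤ n) :
    cumSum n p (D * α'' - α') + cumSum n p (D * (α'' + 1) - (α' + 1)) ≤
      cumSum n p (D * (α'' + 1) - α') + cumSum n p (D * α'' - (α' + 1)) := by
  set a := D * α'' - α' with ha
  have haux : α' + 2 ≤ D * α'' := by nlinarith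
  have h1 : D * α'' - (α' + 1) = a - 1 := by omega
  have h2 : D * (α'' + 1) - α' = a + D := by
    have : D * (α'' + 1) = D * α'' + D := by ring
    omega
  have h3 : D * (α'' + 1) - (α' + 1) = (a + D) - 1 := by
    have : D * (α'' + 1) = D * α'' + D := by ring
    omega
  have ha2 : 2 ≤ a := by omega
  have haD : a + D ≤ n := by omega
  rw [h1, h2, h3]
  have e1 : cumSum n p a = p (n - a + 1) + cumSum n p (a - 1) :=
    cumSum_step n p a (by omega) (by omega)
  have e2 : cumSum n p (a + D) = p (n - (a + D) + 1) + cumSum n p ((a + D) - 1) :=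
    cumSum_step n p (a + D) (by omega) haD
  have hp : p (n - a + 1) ≤ p (n - (a + D) + 1) := by
    apply hpdec _ (by simp; omega) _ (by simp; omega)
    omega
  linarith
end
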